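/- arXiv:2005.12120 — 6 statements merged into one kernel-verified Lean document; each statement's English description precedes it below -/
import Mathlib

section
/- Let Ω ⊆ ℝⁿ be a Lebesgue-measurable set of finite Lebesgue measure, let 1 ≤ p, q < ∞, and let φ : ℝ → ℝ be continuous with |φ(s)| ≤ c₁ + c₂|s|^{p/q} for all s ∈ ℝ, where c₁ ∈ ℝ and c₂ ≥ 0. Then the superposition operator Φ is continuous from L_p(Ω) to L_q(Ω): for every x ∈ L_p(Ω) and every sequence (x_k) in L_p(Ω) with ‖x_k − x‖_{L_p(Ω)} → 0, one has ‖Φ(x_k) − Φ(x)‖_{L_q(Ω)} → 0. -/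
/-!
Vitali's convergence theorem: on a finite measure space, `L_q`-convergence is convergence in
measure together with uniform integrability in `L_q`. Convergence in measure passes from `x_k` to
`φ ∘ x_k` along a.e. convergent subsequences, as `φ` is continuous. Uniform integrability passes
from `x_k` in `L_p` to `φ ∘ x_k` in `L_q` because `|φ ∘ x_k| ≤ c₁ + c₂ |x_k|^{p/q}` and
`‖|f|^{p/q}‖_q = ‖f‖_p^{p/q}`.
-/

open MeasureTheory Filter

namespace MeasureTheory

variable {α ι E F : Type*} {m : MeasurableSpace α} {μ : Measure α}

theorem TendstoInMeasure.comp_continuous [PseudoEMetricSpace E] [PseudoEMetricSpace F]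
    [IsFiniteMeasure μ] {f : ℕ → α → E} {g : α → E} {ψ : E → F} (hψ : Continuous ψ)
    (hf : ∀ n, AEStronglyMeasurable (f n) μ) (hfg : TendstoInMeasure μ f atTop g) :
    TendstoInMeasure μ (fun n ω => ψ (f n ω)) atTop (fun ω => ψ (g ω)) := by
  rw [exists_seq_tendstoInMeasure_atTop_iff fun n => hψ.comp_aestronglyMeasurable (hf n)]
  intro ns hns
  obtain ⟨ns', hns', hae⟩ := (exists_seq_tendstoInMeasure_atTop_iff hf).1 hfg ns hns
  exact ⟨ns', hns', hae.mono fun ω hω => (hψ.tendsto _).comp hω⟩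

variable [NormedAddCommGroup E] [NormedAddCommGroup F] {p : ENNReal}

theorem UnifIntegrable.of_norm_le {f : ι → α → E} {g : ι → α → F} (hg : UnifIntegrable g p μ)
    (hfg : ∀ i, ∀ᵐ ω ∂μ, ‖f i ω‖ ≤ ‖g i ω‖) : UnifIntegrable f p μ := by
  intro ε hε
  obtain ⟨δ, hδ, hδε⟩ := hg hε
  refine ⟨δ, hδ, fun i s hs hμs => (eLpNorm_mono_ae ?_).trans (hδε i s hs hμs)⟩
  filter_upwards [hfg i] with ω hω
  by_cases hωs : ω ∈ s <;> simp [hωs, hω]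

theorem UnifIntegrable.const_smul [NormedSpace ℝ E] {f : ι → α → E}
    (hf : UnifIntegrable f p μ) (c : ℝ) : UnifIntegrable (fun i => c • f i) p μ := by
  intro ε hε
  obtain ⟨δ, hδ, hδε⟩ := hf (show 0 < ε / (‖c‖ + 1) by positivity)
  refine ⟨δ, hδ, fun i s hs hμs => ?_⟩
  calc eLpNorm (s.indicator (c • f i)) p μ = eLpNorm (c • s.indicator (f i)) p μ :=
        congrArg (eLpNorm · p μ) (Set.indicator_const_smul s c (f i))
    _ ≤ ‖c‖ₑ * ENNReal.ofReal (ε / (‖c‖ + 1)) :=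
        eLpNorm_const_smul_le.trans (mul_le_mul_right (hδε i s hs hμs) _)
    _ ≤ ENNReal.ofReal ε := by
        rw [← ofReal_norm, ← ENNReal.ofReal_mul (norm_nonneg c)]
        refine ENNReal.ofReal_le_ofReal ?_
        rw [mul_div_assoc', div_le_iff₀ (by positivity)]
        nlinarith [norm_nonneg c]

theorem UnifIntegrable.norm_rpow {f : ι → α → E} {r : ℝ}
    (hf : UnifIntegrable f (p * ENNReal.ofReal r) μ) (hr : 0 < r) :
    UnifIntegrable (fun i ω => ‖f i ω‖ ^ r) p μ := by
  intro ε hε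
  obtain ⟨δ, hδ, hδε⟩ := hf (Real.rpow_pos_of_pos hε (1 / r))
  refine ⟨δ, hδ, fun i s hs hμs => ?_⟩
  have hind : s.indicator (fun ω => ‖f i ω‖ ^ r) = fun ω => ‖s.indicator (f i) ω‖ ^ r :=
    Set.indicator_comp_of_zero (g := fun y : E => ‖y‖ ^ r) (by simp [hr.ne'])
  calc eLpNorm (s.indicator fun ω => ‖f i ω‖ ^ r) p μ
      = eLpNorm (s.indicator (f i)) (p * ENNReal.ofReal r) μ ^ r := by
        rw [hind, eLpNorm_norm_rpow _ hr]
    _ ≤ ENNReal.ofReal (ε ^ (1 / r)) ^ r := ENNReal.rpow_le_rpow (hδε i s hs hμs) hr.le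
    _ = ENNReal.ofReal ε := by
        rw [ENNReal.ofReal_rpow_of_nonneg (by positivity) hr.le, ← Real.rpow_mul hε.le,
          one_div_mul_cancel hr.ne', Real.rpow_one]

theorem MemLp.comp_of_growth [IsFiniteMeasure μ] {q : ENNReal} {u : α → E} {φ : E → F}
    {a b r : ℝ} (hu : MemLp u (q * ENNReal.ofReal r) μ) (hr : 0 < r) (hφ : Continuous φ)
    (hgrowth : ∀ s, ‖φ s‖ ≤ a + b * ‖s‖ ^ r) : MemLp (fun ω => φ (u ω)) q μ := by
  have hpow : MemLp (fun ω => ‖u ω‖ ^ r) q μ := by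
    simpa [ENNReal.toReal_ofReal hr.le, ENNReal.mul_div_cancel_right, hr] using
      hu.norm_rpow_div (ENNReal.ofReal r)
  exact ((memLp_const a).add (hpow.const_mul b)).of_le (hφ.comp_aestronglyMeasurable hu.1)
    (ae_of_all _ fun ω => (hgrowth (u ω)).trans (le_abs_self _))

theorem UnifIntegrable.comp_of_growth [IsFiniteMeasure μ] {q : ENNReal} {u : ι → α → E}
    {φ : E → F} {a b r : ℝ} (hu : UnifIntegrable u (q * ENNReal.ofReal r) μ)
    (hu_meas : ∀ i, AEStronglyMeasurable (u i) μ) (hq : 1 ≤ q) (hq' : q ≠ ⊤) (hr : 0 < r)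
    (hgrowth : ∀ s, ‖φ s‖ ≤ a + b * ‖s‖ ^ r) :
    UnifIntegrable (fun i ω => φ (u i ω)) q μ := by
  have hbound := (unifIntegrable_const hq hq' (memLp_const a)).add
    ((hu.norm_rpow hr).const_smul b) hq (fun _ => aestronglyMeasurable_const)
    (fun i => (((hu_meas i).norm.aemeasurable.pow_const r).aestronglyMeasurable).const_smul b)
  exact hbound.of_norm_le fun i => ae_of_all _ fun ω => (hgrowth (u i ω)).trans (le_abs_self _)

end MeasureTheory

theorem superposition_continuous_Lp_to_Lq_general
    {n : ℕ} (Ω : Set (Fin n → ℝ)) (hΩfin : volume Ω < ⊤)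
    (p q : ℝ) (hp : 1 ≤ p) (hq : 1 ≤ q)
    (φ : ℝ → ℝ) (hφ : Continuous φ)
    (c₁ c₂ : ℝ)
    (hgrowth : ∀ s : ℝ, |φ s| ≤ c₁ + c₂ * |s| ^ (p / q))
    (x : (Fin n → ℝ) → ℝ) (xk : ℕ → (Fin n → ℝ) → ℝ)
    (hx : MemLp x (ENNReal.ofReal p) (volume.restrict Ω))
    (hxk : ∀ k, MemLp (xk k) (ENNReal.ofReal p) (volume.restrict Ω))
    (hconv : Tendsto
      (fun k => eLpNorm (xk k - x) (ENNReal.ofReal p) (volume.restrict Ω))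
      atTop (nhds 0)) :
    Tendsto
      (fun k => eLpNorm ((fun ω => φ (xk k ω)) - fun ω => φ (x ω))
        (ENNReal.ofReal q) (volume.restrict Ω))
      atTop (nhds 0) := by
  have : IsFiniteMeasure (volume.restrict Ω) := isFiniteMeasure_restrict.2 hΩfin.ne
  have hr : 0 < p / q := div_pos (by linarith) (by linarith)
  have hQ : 1 ≤ ENNReal.ofReal q := ENNReal.one_le_ofReal.2 hq
  have hunif := unifIntegrable_of_tendsto_Lp (ENNReal.one_le_ofReal.2 hp) ENNReal.ofReal_ne_top
    hxk hx hconv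
  have hconv_meas := tendstoInMeasure_of_tendsto_eLpNorm (ENNReal.ofReal_pos.2 (by linarith)).ne'
    (fun k => (hxk k).1) hx.1 hconv
  have hpq : ENNReal.ofReal p = ENNReal.ofReal q * ENNReal.ofReal (p / q) := by
    rw [← ENNReal.ofReal_mul (by linarith), mul_div_cancel₀ _ (by linarith)]
  rw [hpq] at hx hunif
  exact tendsto_Lp_finite_of_tendstoInMeasure hQ ENNReal.ofReal_ne_top
    (fun k => hφ.comp_aestronglyMeasurable (hxk k).1) (hx.comp_of_growth hr hφ hgrowth)
    (hunif.comp_of_growth (fun k => (hxk k).1) hQ ENNReal.ofReal_ne_top hr hgrowth)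
    (hconv_meas.comp_continuous hφ fun k => (hxk k).1)

/-- Under the growth condition `|φ(s)| ≤ c₁ + c₂ |s|^(p/q)`, the
superposition operator `Φ(x) = φ ∘ x` is continuous from `L_p(Ω)` to `L_q(Ω)`:
if `‖x_k − x‖_{L_p(Ω)} → 0` then `‖Φ(x_k) − Φ(x)‖_{L_q(Ω)} → 0`. -/
theorem superposition_continuous_Lp_to_Lq
    {n : ℕ} (Ω : Set (Fin n → ℝ)) (hΩ : MeasurableSet Ω) (hΩfin : volume Ω < ⊤)
    (p q : ℝ) (hp : 1 ≤ p) (hq : 1 ≤ q)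
    (φ : ℝ → ℝ) (hφ : Continuous φ)
    (c₁ c₂ : ℝ) (hc₂ : 0 ≤ c₂)
    (hgrowth : ∀ s : ℝ, |φ s| ≤ c₁ + c₂ * |s| ^ (p / q))
    (x : (Fin n → ℝ) → ℝ) (xk : ℕ → (Fin n → ℝ) → ℝ)
    (hx : MemLp x (ENNReal.ofReal p) (volume.restrict Ω))
    (hxk : ∀ k, MemLp (xk k) (ENNReal.ofReal p) (volume.restrict Ω))
    (hconv : Tendsto
      (fun k => eLpNorm (xk k - x) (ENNReal.ofReal p) (volume.restrict Ω))
      atTop (nhds 0)) :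
    Tendsto
      (fun k => eLpNorm ((fun ω => φ (xk k ω)) - fun ω => φ (x ω))
        (ENNReal.ofReal q) (volume.restrict Ω))
      atTop (nhds 0) :=
  superposition_continuous_Lp_to_Lq_general Ω hΩfin p q hp hq φ hφ c₁ c₂ hgrowth x xk hx hxk hconv
end

section
/- Let Y be a real Banach space and A : Y → Y a bounded linear operator with ‖exp(s·A)‖ ≤ M e^{−μ s} for all s ≥ 0, where M ≥ 1 and μ > 0. Let t₁, t₂ : ℝ_{≥0} → ℝ_{≥0} be functions with t₁(T) ≤ t₂(T) ≤ T for all T and t₂(T) − t₁(T) → ∞ as T → ∞. For each T > 0 let r_T : ℝ → Y be continuous and λ_T : ℝ → Y satisfy λ_T(t) = exp((t₂(T)−t)·A) λ_T(t₂(T)) + ∫_t^{t₂(T)} exp((s−t)·A) r_T(s) ds for all t ∈ [t₁(T), t₂(T)]. Assume sup_{T>0} ‖λ_T(t₂(T))‖_Y < ∞ and sup_{t ∈ [t₁(T), t₂(T)]} ‖r_T(t)‖_Y → 0 as T → ∞. Then the adjoints satisfy an interval turnpike property: for every ε > 0 there exists T₀ > 0 such that for all T ≥ T₀ and all t ∈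 [t₁(T), t₁(T) + (t₂(T)−t₁(T))/2], ‖λ_T(t)‖_Y ≤ ε. -/
/-!
On `[t, t₂]` the mild formula splits `λ_T(t)` into the terminal value propagated backwards over
time `t₂ - t`, of size at most `M e^{-μ (t₂ - t)} B`, and the convolution of the residual with the
decaying semigroup, of size at most `M δ / μ` when `‖r_T‖ ≤ δ`. On the first half of the interval
`t₂ - t ≥ (t₂ - t₁) / 2 → ∞`, so the first term vanishes uniformly, and the second is small once
`T` is large enough for `δ` to be small.
-/

open MeasureTheory intervalIntegral Filter Topology Set

theorem integral_exp_neg_mul_sub {μ a b : ℝ} (hμ : μ ≠ 0) :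
    ∫ s in a..b, Real.exp (-μ * (s - a)) = (1 - Real.exp (-μ * (b - a))) / μ := by
  have hderiv : ∀ x, HasDerivAt (fun s => -Real.exp (-μ * (s - a)) / μ)
      (Real.exp (-μ * (x - a))) x := fun x => by
    refine ((((hasDerivAt_id' x).sub_const a).const_mul (-μ)).exp.neg.div_const μ).congr_deriv ?_
    field_simp
  rw [integral_eq_sub_of_hasDerivAt (fun x _ => hderiv x)
    ((by fun_prop : Continuous fun s => Real.exp (-μ * (s - a))).intervalIntegrable a b)]
  simp only [sub_self, mul_zero, Real.exp_zero]
  ring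

theorem norm_intervalIntegral_le_of_norm_le_exp_decay {E : Type*} [NormedAddCommGroup E]
    [NormedSpace ℝ E] {f : ℝ → E} {a b C μ : ℝ} (hμ : 0 < μ) (hC : 0 ≤ C) (hab : a ≤ b)
    (hf : ∀ s ∈ Ioc a b, ‖f s‖ ≤ C * Real.exp (-μ * (s - a))) :
    ‖∫ s in a..b, f s‖ ≤ C / μ := by
  calc ‖∫ s in a..b, f s‖ ≤ ∫ s in a..b, C * Real.exp (-μ * (s - a)) :=
        norm_integral_le_of_norm_le hab (ae_of_all _ hf)
          ((by fun_prop : Continuous fun s => C * Real.exp (-μ * (s - a))).intervalIntegrable a b)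
    _ = C * (1 - Real.exp (-μ * (b - a))) / μ := by
        rw [intervalIntegral.integral_const_mul, integral_exp_neg_mul_sub hμ.ne', mul_div_assoc]
    _ ≤ C / μ := by
        gcongr
        exact mul_le_of_le_one_right hC (sub_le_self _ (Real.exp_nonneg _))

section ExponentiallyStable

variable {Y : Type*} [NormedAddCommGroup Y] [NormedSpace ℝ Y] {A : Y →L[ℝ] Y} {M μ : ℝ}

theorem nonneg_of_norm_exp_smul_le
    (hstab : ∀ s : ℝ, 0 ≤ s → ‖NormedSpace.exp (s • A)‖ ≤ M * Real.exp (-μ * s)) : 0 ≤ M := by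
  simpa using (norm_nonneg _).trans (hstab 0 le_rfl)

theorem norm_exp_smul_apply_le
    (hstab : ∀ s : ℝ, 0 ≤ s → ‖NormedSpace.exp (s • A)‖ ≤ M * Real.exp (-μ * s))
    {s : ℝ} (hs : 0 ≤ s) (y : Y) :
    ‖NormedSpace.exp (s • A) y‖ ≤ M * Real.exp (-μ * s) * ‖y‖ :=
  ((NormedSpace.exp (s • A)).le_opNorm y).trans
    (mul_le_mul_of_nonneg_right (hstab s hs) (norm_nonneg y))

theorem norm_le_of_mild_backward (hμ : 0 < μ)
    (hstab : ∀ s : ℝ, 0 ≤ s → ‖NormedSpace.exp (s • A)‖ ≤ M * Real.exp (-μ * s))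
    {lam r : ℝ → Y} {t b δ : ℝ} (htb : t ≤ b) (hr : ∀ s ∈ Icc t b, ‖r s‖ ≤ δ)
    (hlam : lam t = NormedSpace.exp ((b - t) • A) (lam b) +
      ∫ s in t..b, NormedSpace.exp ((s - t) • A) (r s)) :
    ‖lam t‖ ≤ M * Real.exp (-μ * (b - t)) * ‖lam b‖ + M * δ / μ := by
  have hM := nonneg_of_norm_exp_smul_le hstab
  have hδ : 0 ≤ δ := (norm_nonneg _).trans (hr t ⟨le_rfl, htb⟩)
  rw [hlam]
  refine (norm_add_le _ _).trans
    (add_le_add (norm_exp_smul_apply_le hstab (sub_nonneg.2 htb) _) ?_)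
  refine norm_intervalIntegral_le_of_norm_le_exp_decay hμ (by positivity) htb fun s hs => ?_
  calc ‖NormedSpace.exp ((s - t) • A) (r s)‖ ≤ M * Real.exp (-μ * (s - t)) * ‖r s‖ :=
        norm_exp_smul_apply_le hstab (sub_nonneg.2 hs.1.le) _
    _ ≤ M * Real.exp (-μ * (s - t)) * δ := by gcongr; exact hr s (Ioc_subset_Icc_self hs)
    _ = M * δ * Real.exp (-μ * (s - t)) := by ring

end ExponentiallyStable

theorem adjoint_interval_turnpike_exponentially_stable_general
    {Y : Type*} [NormedAddCommGroup Y] [NormedSpace ℝ Y]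
    (A : Y →L[ℝ] Y) (M μ : ℝ) (hμ : 0 < μ)
    (hstab : ∀ s : ℝ, 0 ≤ s → ‖NormedSpace.exp (s • A)‖ ≤ M * Real.exp (-μ * s))
    (t₁ t₂ : ℝ → ℝ) (ht₁₂ : ∀ T, t₁ T ≤ t₂ T)
    (hgrow : Tendsto (fun T => t₂ T - t₁ T) atTop atTop)
    (r : ℝ → ℝ → Y)
    (lam : ℝ → ℝ → Y)
    (hlam : ∀ T > (0 : ℝ), ∀ t ∈ Set.Icc (t₁ T) (t₂ T), lam T t =
      (NormedSpace.exp ((t₂ T - t) • A)) (lam T (t₂ T)) +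
        ∫ s in t..(t₂ T), (NormedSpace.exp ((s - t) • A)) (r T s))
    (hbdd : ∃ B : ℝ, ∀ T > (0 : ℝ), ‖lam T (t₂ T)‖ ≤ B)
    (hres : ∀ ε > (0 : ℝ), ∃ T₀ > (0 : ℝ), ∀ T ≥ T₀,
      ∀ t ∈ Set.Icc (t₁ T) (t₂ T), ‖r T t‖ ≤ ε) :
    ∀ ε > (0 : ℝ), ∃ T₀ > (0 : ℝ), ∀ T ≥ T₀,
      ∀ t ∈ Set.Icc (t₁ T) (t₁ T + (t₂ T - t₁ T) / 2), ‖lam T t‖ ≤ ε := by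
  intro ε hε
  obtain ⟨B, hB⟩ := hbdd
  have hM := nonneg_of_norm_exp_smul_le hstab
  obtain ⟨δ, hδ, hδε⟩ : ∃ δ > 0, M * δ / μ ≤ ε / 2 :=
    ⟨ε * μ / (2 * (M + 1)), by positivity, by
      rw [div_le_div_iff₀ (by positivity) two_pos]
      field_simp
      nlinarith⟩
  obtain ⟨T₁, hT₁, hrδ⟩ := hres δ hδ
  have hdecay : Tendsto (fun T => M * Real.exp (-μ * ((t₂ T - t₁ T) / 2)) * B) atTop (𝓝 0) := by
    simpa using ((Real.tendsto_exp_neg_atTop_nhds_zero.comp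
      ((hgrow.atTop_div_const two_pos).const_mul_atTop hμ)).const_mul M).mul_const B
  obtain ⟨T₂, hT₂⟩ := eventually_atTop.1 (hdecay.eventually (ge_mem_nhds (half_pos hε)))
  refine ⟨max T₁ T₂, hT₁.trans_le (le_max_left _ _), fun T hT t ht => ?_⟩
  have hT₁T : T₁ ≤ T := (le_max_left _ _).trans hT
  have ht₂ : t ≤ t₂ T := by linarith [ht.2, ht₁₂ T]
  calc ‖lam T t‖ ≤ M * Real.exp (-μ * (t₂ T - t)) * ‖lam T (t₂ T)‖ + M * δ / μ :=
        norm_le_of_mild_backward hμ hstab ht₂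
          (fun s hs => hrδ T hT₁T s ⟨ht.1.trans hs.1, hs.2⟩)
          (hlam T (hT₁.trans_le hT₁T) t ⟨ht.1, ht₂⟩)
    _ ≤ M * Real.exp (-μ * ((t₂ T - t₁ T) / 2)) * B + ε / 2 := by
        gcongr M * ?_ * ?_ + ?_
        · exact Real.exp_le_exp.2 (by nlinarith [ht.2])
        · exact hB T (hT₁.trans_le hT₁T)
    _ ≤ ε / 2 + ε / 2 := by gcongr; exact hT₂ T ((le_max_right _ _).trans hT)
    _ = ε := add_halves ε

/-- (Bounded-generator adjoint turnpike for exponentially stable `A`.)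
If `‖exp(sA)‖ ≤ M e^{−μs}` for `s ≥ 0`, `t₁(T) ≤ t₂(T) ≤ T` with
`t₂(T) − t₁(T) → ∞`, each `λ_T` solves the mild backward equation with residual
`r_T` on `[t₁(T), t₂(T)]`, the terminal values `λ_T(t₂(T))` are uniformly bounded,
and `sup_{[t₁(T),t₂(T)]} ‖r_T‖ → 0`, then for every `ε > 0` there is `T₀ > 0` such
that `‖λ_T(t)‖ ≤ ε` for all `T ≥ T₀` and `t ∈ [t₁(T), t₁(T) + (t₂(T)−t₁(T))/2]`. -/
theorem adjoint_interval_turnpike_exponentially_stable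
    {Y : Type*} [NormedAddCommGroup Y] [NormedSpace ℝ Y] [CompleteSpace Y]
    (A : Y →L[ℝ] Y) (M μ : ℝ) (hM : 1 ≤ M) (hμ : 0 < μ)
    (hstab : ∀ s : ℝ, 0 ≤ s → ‖NormedSpace.exp (s • A)‖ ≤ M * Real.exp (-μ * s))
    (t₁ t₂ : ℝ → ℝ) (ht₁ : ∀ T, 0 ≤ t₁ T) (ht₁₂ : ∀ T, t₁ T ≤ t₂ T)
    (ht₂ : ∀ T, t₂ T ≤ T)
    (hgrow : Tendsto (fun T => t₂ T - t₁ T) atTop atTop)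
    (r : ℝ → ℝ → Y) (hr : ∀ T > (0 : ℝ), Continuous (r T))
    (lam : ℝ → ℝ → Y)
    (hlam : ∀ T > (0 : ℝ), ∀ t ∈ Set.Icc (t₁ T) (t₂ T), lam T t =
      (NormedSpace.exp ((t₂ T - t) • A)) (lam T (t₂ T)) +
        ∫ s in t..(t₂ T), (NormedSpace.exp ((s - t) • A)) (r T s))
    (hbdd : ∃ B : ℝ, ∀ T > (0 : ℝ), ‖lam T (t₂ T)‖ ≤ B)
    (hres : ∀ ε > (0 : ℝ), ∃ T₀ > (0 : ℝ), ∀ T ≥ T₀,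
      ∀ t ∈ Set.Icc (t₁ T) (t₂ T), ‖r T t‖ ≤ ε) :
    ∀ ε > (0 : ℝ), ∃ T₀ > (0 : ℝ), ∀ T ≥ T₀,
      ∀ t ∈ Set.Icc (t₁ T) (t₁ T + (t₂ T - t₁ T) / 2), ‖lam T t‖ ≤ ε :=
  adjoint_interval_turnpike_exponentially_stable_general A M μ hμ hstab t₁ t₂ ht₁₂ hgrow r lam hlam
    hbdd hres
end

section
/- Let Y and U be real Hilbert spaces, A : Y → Y and C : Y → U bounded linear operators, t_c > 0 and α > 0, and assume the observability inequality ∫_0^{t_c} ‖C(exp(s·A) y)‖_U² ds ≥ α ‖y‖_Y² holds for all y ∈ Y. Then there exists a constant c > 0 (depending only on α, t_c, ‖C‖ and sup_{s∈[0,t_c]} ‖exp(s·A)‖, and in particular independent of t, λ and w) such that for every t ≥ t_c, every continuous w : ℝ → Y, and every differentiable λ : ℝ → Y satisfying λ′(s) = −A λ(s) + w(s) for all s ∈ [t − t_c, t], one has ‖λ(t)‖_Y² ≤ c ∫_{t−t_c}^t ( ‖C(λ(s))‖_U² + ‖w(s)‖_Y² ) ds. -/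
/-!
Along the backward equation `λ' = -Aλ + w`, the curve `r ↦ exp((r - a)A) λ(r)` has derivative
`exp((r - a)A) w(r)`, so `exp((t - r)A) λ(t) = λ(r) + ∫_r^t exp((σ - r)A) w(σ) dσ`. Testing the
observability inequality with `y = λ(t)` and substituting `s = t - r` compares
`∫ ‖C exp(sA) λ(t)‖²` with `∫ ‖C λ‖²` up to the integral term, which is at most
`M ∫_{t - t_c}^t ‖w‖` for `M = sup_{[0, t_c]} ‖exp(sA)‖`; Cauchy–Schwarz turns its square into
`t_c ∫ ‖w‖²`. This gives the estimate with `c = (2 + 2 t_c² ‖C‖² M²) / α`.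
-/

open MeasureTheory intervalIntegral

theorem sq_intervalIntegral_le {f : ℝ → ℝ} (hf : Continuous f) {a b : ℝ} (hab : a ≤ b) :
    (∫ x in a..b, f x) ^ 2 ≤ (b - a) * ∫ x in a..b, f x ^ 2 := by
  rcases hab.eq_or_lt with rfl | hab
  · simp
  have jensen : (⨍ x in a..b, f x) ^ 2 ≤ ⨍ x in a..b, f x ^ 2 :=
    even_two.convexOn_pow.map_set_average_le (continuous_pow 2).continuousOn isClosed_univ
      (by simp [Set.uIoc_of_le hab.le, hab]) (by simp [Set.uIoc_of_le hab.le]) (by simp)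
      hf.integrableOn_uIoc (hf.pow 2).integrableOn_uIoc
  have hba : 0 < b - a := sub_pos.2 hab
  rw [interval_average_eq_div, interval_average_eq_div, div_pow,
    div_le_div_iff₀ (by positivity) hba] at jensen
  nlinarith

theorem continuous_exp_smul {𝔸 : Type*} [NormedRing 𝔸] [NormedAlgebra ℝ 𝔸] [CompleteSpace 𝔸]
    (x : 𝔸) : Continuous fun r : ℝ => NormedSpace.exp (r • x) :=
  continuous_iff_continuousAt.2 fun r => (hasDerivAt_exp_smul_const x r).continuousAt

section BackwardEquation

variable {E F : Type*} [NormedAddCommGroup E] [NormedSpace ℝ E] [CompleteSpace E]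
  [NormedAddCommGroup F] [NormedSpace ℝ F] (A : E →L[ℝ] E) (C : E →L[ℝ] F) {w lam : ℝ → E}

theorem exp_smul_apply_eq_add_integral (hw : Continuous w) {a b : ℝ} (hab : a ≤ b)
    (hlam : ∀ s ∈ Set.Icc a b, HasDerivAt lam (-(A (lam s)) + w s) s) :
    NormedSpace.exp ((b - a) • A) (lam b) =
      lam a + ∫ s in a..b, NormedSpace.exp ((s - a) • A) (w s) := by
  have hexp : ∀ s, HasDerivAt (fun r : ℝ => NormedSpace.exp ((r - a) • A))
      (NormedSpace.exp ((s - a) • A) * A) s := fun s =>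
    (hasDerivAt_exp_smul_const A (s - a)).comp_sub_const s a
  have hderiv : ∀ s ∈ Set.uIcc a b,
      HasDerivAt (fun r => NormedSpace.exp ((r - a) • A) (lam r))
        (NormedSpace.exp ((s - a) • A) (w s)) s := by
    intro s hs
    rw [Set.uIcc_of_le hab] at hs
    convert (hexp s).clm_apply (hlam s hs) using 1
    simp [map_add]
  have hcont : Continuous fun s => NormedSpace.exp ((s - a) • A) (w s) :=
    ((continuous_exp_smul A).comp (continuous_sub_right a)).clm_apply hw
  rw [integral_eq_sub_of_hasDerivAt hderiv (hcont.intervalIntegrable a b)]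
  simp

theorem norm_exp_smul_apply_sub_le (hw : Continuous w) {a b M : ℝ} (hab : a ≤ b)
    (hlam : ∀ s ∈ Set.Icc a b, HasDerivAt lam (-(A (lam s)) + w s) s)
    (hM : ∀ r ∈ Set.Icc 0 (b - a), ‖NormedSpace.exp (r • A)‖ ≤ M) :
    ‖NormedSpace.exp ((b - a) • A) (lam b) - lam a‖ ≤ M * ∫ s in a..b, ‖w s‖ := by
  have hexp : Continuous fun s : ℝ => NormedSpace.exp ((s - a) • A) :=
    (continuous_exp_smul A).comp (continuous_sub_right a)
  rw [exp_smul_apply_eq_add_integral A hw hab hlam, add_sub_cancel_left,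
    ← intervalIntegral.integral_const_mul]
  refine (intervalIntegral.norm_integral_le_integral_norm hab).trans
    (integral_mono_on hab ?_ ?_ fun s hs => ?_)
  · exact (hexp.clm_apply hw).norm.intervalIntegrable a b
  · exact (continuous_const.mul hw.norm).intervalIntegrable a b
  · exact (ContinuousLinearMap.le_opNorm _ _).trans <| mul_le_mul_of_nonneg_right
      (hM _ ⟨sub_nonneg.2 hs.1, sub_le_sub_right hs.2 a⟩) (norm_nonneg _)

theorem norm_sq_comp_exp_smul_apply_le (hw : Continuous w) {t T M r : ℝ}
    (hlam : ∀ s ∈ Set.Icc (t - T) t, HasDerivAt lam (-(A (lam s)) + w s) s)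
    (hM : ∀ r ∈ Set.Icc 0 T, ‖NormedSpace.exp (r • A)‖ ≤ M) (hr : r ∈ Set.Icc (t - T) t) :
    ‖C (NormedSpace.exp ((t - r) • A) (lam t))‖ ^ 2 ≤
      2 * (‖C (lam r)‖ ^ 2 + (‖C‖ * (M * ∫ s in (t - T)..t, ‖w s‖)) ^ 2) := by
  have hM0 : 0 ≤ M := (norm_nonneg _).trans (hM 0 ⟨le_rfl, by linarith [hr.1, hr.2]⟩)
  have hdev : ‖NormedSpace.exp ((t - r) • A) (lam t) - lam r‖ ≤
      M * ∫ s in (t - T)..t, ‖w s‖ := by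
    refine (norm_exp_smul_apply_sub_le A hw hr.2 (fun s hs => hlam s ⟨hr.1.trans hs.1, hs.2⟩)
      fun s hs => hM s ⟨hs.1, by linarith [hs.2, hr.1]⟩).trans
      (mul_le_mul_of_nonneg_left ?_ hM0)
    exact integral_mono_interval hr.1 hr.2 le_rfl (ae_of_all _ fun _ => norm_nonneg _)
      (hw.norm.intervalIntegrable _ _)
  calc ‖C (NormedSpace.exp ((t - r) • A) (lam t))‖ ^ 2
      = ‖C (lam r) + C (NormedSpace.exp ((t - r) • A) (lam t) - lam r)‖ ^ 2 := by
        rw [← map_add, add_sub_cancel]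
    _ ≤ (‖C (lam r)‖ + ‖C‖ * (M * ∫ s in (t - T)..t, ‖w s‖)) ^ 2 := by
        gcongr
        exact (norm_add_le _ _).trans (by gcongr; exact C.le_opNorm_of_le hdev)
    _ ≤ _ := add_sq_le

theorem integral_norm_sq_comp_exp_smul_le (hw : Continuous w) {t T M : ℝ} (hT : 0 ≤ T)
    (hlam : ∀ s ∈ Set.Icc (t - T) t, HasDerivAt lam (-(A (lam s)) + w s) s)
    (hM : ∀ r ∈ Set.Icc 0 T, ‖NormedSpace.exp (r • A)‖ ≤ M) :
    ∫ s in (0:ℝ)..T, ‖C (NormedSpace.exp (s • A) (lam t))‖ ^ 2 ≤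
      (2 + 2 * T ^ 2 * ‖C‖ ^ 2 * M ^ 2) *
        ∫ s in (t - T)..t, (‖C (lam s)‖ ^ 2 + ‖w s‖ ^ 2) := by
  have htT : t - T ≤ t := sub_le_self t hT
  set W := ∫ s in (t - T)..t, ‖w s‖
  have hClam : IntervalIntegrable (fun s => ‖C (lam s)‖ ^ 2) volume (t - T) t := by
    refine ContinuousOn.intervalIntegrable ?_
    rw [Set.uIcc_of_le htT]
    exact (C.continuous.comp_continuousOn
      fun s hs => (hlam s hs).continuousAt.continuousWithinAt).norm.pow 2
  have hexp : Continuous fun r : ℝ => ‖C (NormedSpace.exp ((t - r) • A) (lam t))‖ ^ 2 :=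
    (C.continuous.comp (((continuous_exp_smul A).comp
      (continuous_sub_left t)).clm_apply continuous_const)).norm.pow 2
  have hW : W ^ 2 ≤ T * ∫ s in (t - T)..t, ‖w s‖ ^ 2 := by
    simpa using sq_intervalIntegral_le hw.norm htT
  have hClam0 : 0 ≤ ∫ s in (t - T)..t, ‖C (lam s)‖ ^ 2 :=
    integral_nonneg htT fun _ _ => sq_nonneg _
  have hw0 : 0 ≤ ∫ s in (t - T)..t, ‖w s‖ ^ 2 := integral_nonneg htT fun _ _ => sq_nonneg _
  calc ∫ s in (0:ℝ)..T, ‖C (NormedSpace.exp (s • A) (lam t))‖ ^ 2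
      = ∫ r in (t - T)..t, ‖C (NormedSpace.exp ((t - r) • A) (lam t))‖ ^ 2 := by
        simpa using (integral_comp_sub_left
          (fun s => ‖C (NormedSpace.exp (s • A) (lam t))‖ ^ 2) t (a := t - T) (b := t)).symm
    _ ≤ ∫ r in (t - T)..t, 2 * (‖C (lam r)‖ ^ 2 + (‖C‖ * (M * W)) ^ 2) :=
        integral_mono_on htT (hexp.intervalIntegrable _ _)
          ((hClam.add intervalIntegrable_const).const_mul 2)
          fun r hr => norm_sq_comp_exp_smul_apply_le A C hw hlam hM hr
    _ = 2 * (∫ r in (t - T)..t, ‖C (lam r)‖ ^ 2) + 2 * T * ‖C‖ ^ 2 * M ^ 2 * W ^ 2 := by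
        rw [intervalIntegral.integral_const_mul,
          intervalIntegral.integral_add hClam intervalIntegrable_const,
          intervalIntegral.integral_const, sub_sub_cancel, smul_eq_mul]
        ring
    _ ≤ _ := by
        rw [intervalIntegral.integral_add hClam (Continuous.intervalIntegrable (by fun_prop) _ _)]
        nlinarith [mul_le_mul_of_nonneg_left hW (by positivity : 0 ≤ 2 * T * ‖C‖ ^ 2 * M ^ 2),
          mul_nonneg (by positivity : 0 ≤ 2 * T ^ 2 * ‖C‖ ^ 2 * M ^ 2) hClam0]

end BackwardEquation

theorem adjoint_bound_of_observability_general
    {Y U : Type*} [NormedAddCommGroup Y] [InnerProductSpace ℝ Y] [CompleteSpace Y]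
    [NormedAddCommGroup U] [InnerProductSpace ℝ U]
    (A : Y →L[ℝ] Y) (C : Y →L[ℝ] U) (tc α : ℝ) (htc : 0 < tc) (hα : 0 < α)
    (hobs : ∀ y : Y,
      α * ‖y‖ ^ 2 ≤ ∫ s in (0:ℝ)..tc, ‖C ((NormedSpace.exp (s • A)) y)‖ ^ 2) :
    ∃ c > (0 : ℝ), ∀ t : ℝ, tc ≤ t → ∀ w : ℝ → Y, Continuous w →
      ∀ lam : ℝ → Y,
        (∀ s ∈ Set.Icc (t - tc) t, HasDerivAt lam (-(A (lam s)) + w s) s) →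
        ‖lam t‖ ^ 2 ≤ c * ∫ s in (t - tc)..t, (‖C (lam s)‖ ^ 2 + ‖w s‖ ^ 2) := by
  obtain ⟨M, hM⟩ : ∃ M, ∀ r ∈ Set.Icc (0:ℝ) tc, ‖NormedSpace.exp (r • A)‖ ≤ M :=
    isCompact_Icc.exists_bound_of_continuousOn (continuous_exp_smul A).continuousOn
  refine ⟨(2 + 2 * tc ^ 2 * ‖C‖ ^ 2 * M ^ 2) / α, by positivity,
    fun t _ w hw lam hlam => ?_⟩
  rw [div_mul_eq_mul_div, le_div_iff₀ hα, mul_comm]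
  exact (hobs (lam t)).trans (integral_norm_sq_comp_exp_smul_le A C hw htc.le hlam hM)

/-- (Adjoint bound under observability.) If the observability
inequality `∫_0^{t_c} ‖C exp(sA) y‖² ds ≥ α ‖y‖²` holds for all `y ∈ Y`, then there
is `c > 0` such that every differentiable `λ` with `λ′(s) = −Aλ(s) + w(s)` on
`[t − t_c, t]` (with `w` continuous, `t ≥ t_c`) satisfies
`‖λ(t)‖² ≤ c ∫_{t−t_c}^t (‖C λ(s)‖² + ‖w(s)‖²) ds`. -/
theorem adjoint_bound_of_observability
    {Y U : Type*} [NormedAddCommGroup Y] [InnerProductSpace ℝ Y] [CompleteSpace Y]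
    [NormedAddCommGroup U] [InnerProductSpace ℝ U] [CompleteSpace U]
    (A : Y →L[ℝ] Y) (C : Y →L[ℝ] U) (tc α : ℝ) (htc : 0 < tc) (hα : 0 < α)
    (hobs : ∀ y : Y,
      α * ‖y‖ ^ 2 ≤ ∫ s in (0:ℝ)..tc, ‖C ((NormedSpace.exp (s • A)) y)‖ ^ 2) :
    ∃ c > (0 : ℝ), ∀ t : ℝ, tc ≤ t → ∀ w : ℝ → Y, Continuous w →
      ∀ lam : ℝ → Y,
        (∀ s ∈ Set.Icc (t - tc) t, HasDerivAt lam (-(A (lam s)) + w s) s) →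
        ‖lam t‖ ^ 2 ≤ c * ∫ s in (t - tc)..t, (‖C (lam s)‖ ^ 2 + ‖w s‖ ^ 2) :=
  adjoint_bound_of_observability_general A C tc α htc hα hobs
end

section
/- Let Y, A, C, t_c, α be as in the observability setting: Y and U real Hilbert spaces, A : Y → Y and C : Y → U bounded linear operators, t_c > 0, α > 0, and ∫_0^{t_c} ‖C(exp(s·A) y)‖_U² ds ≥ α ‖y‖_Y² for all y ∈ Y. Let t₁, t₂ : ℝ_{≥0} → ℝ_{≥0} satisfy t₁(T) ≤ t₂(T) ≤ T and t₂(T) − t₁(T) → ∞ as T → ∞. For each T > 0 let λ_T : ℝ → Y be differentiable, p_T : ℝ → L(Y,Y), m_T : ℝ → L(Y,U) and q_T : ℝ → Y, n_T : ℝ → U be continuous, such that on [t₁(T), t₂(T)]: λ_T′(s) = −A λ_T(s) − p_T(s)(λ_T(s)) + q_T(s) and 0 = C(λ_T(s)) + m_T(s)(λ_T(s)) + n_T(s). Assume sup_{T} sup_{t ∈ [t₁(T),t₂(T)]} ‖λ_T(t)‖_Y < ∞ and that the suprema over [t₁(T), t₂(T)] of ‖p_T(s)‖, ‖q_T(s)‖_Y,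 ‖m_T(s)‖ and ‖n_T(s)‖_U all tend to 0 as T → ∞. Then for every ε > 0 there exists T₀ > 0 such that for all T ≥ T₀ and all t ∈ [t₁(T) + t_c, t₂(T)], ‖λ_T(t)‖_Y ≤ ε. -/
/-!
Fix `T` and `t`, and put `y = λ_T(t)`. Run backwards in time, `u ↦ λ_T(t - u)` solves
`μ' = A μ + (p_T μ - q_T)`, a small perturbation of `μ' = A μ`; by variation of constants it stays
within `O(δ)` of the free trajectory `exp(u A) y` on `[0, t_c]`, where `δ` bounds the remainder
terms. The algebraic equation makes `C λ_T` of size `O(δ)` as well, so `‖C (exp(u A) y)‖ = O(δ)`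
on `[0, t_c]`, and the observability inequality turns this into `‖y‖ = O(δ)`, uniformly in `T`.
-/

open MeasureTheory intervalIntegral Filter Set NormedSpace

theorem exp_smul_mul_exp_neg_smul {𝔸 : Type*} [NormedRing 𝔸] [NormedAlgebra ℝ 𝔸]
    [CompleteSpace 𝔸] (a : 𝔸) (s : ℝ) : exp (s • a) * exp ((-s) • a) = 1 := by
  let +nondep : NormedAlgebra ℚ 𝔸 := .restrictScalars ℚ ℝ 𝔸
  rw [← exp_add_of_commute (((Commute.refl a).smul_left s).smul_right (-s)), ← add_smul,
    add_neg_cancel, zero_smul, exp_zero]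

theorem norm_le_of_observability {E F : Type*} [SeminormedAddCommGroup E]
    [SeminormedAddCommGroup F] (f : ℝ → F) {y : E} {tc α η : ℝ} (htc : 0 ≤ tc) (hα : 0 < α)
    (hf : IntervalIntegrable (fun s => ‖f s‖ ^ 2) volume 0 tc)
    (hobs : α * ‖y‖ ^ 2 ≤ ∫ s in (0 : ℝ)..tc, ‖f s‖ ^ 2)
    (hη : ∀ s ∈ Icc 0 tc, ‖f s‖ ≤ η) : ‖y‖ ≤ √(tc / α) * η := by
  have hη0 : 0 ≤ η := (norm_nonneg _).trans (hη 0 ⟨le_rfl, htc⟩)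
  have hint : ∫ s in (0 : ℝ)..tc, ‖f s‖ ^ 2 ≤ tc * η ^ 2 := by
    calc ∫ s in (0 : ℝ)..tc, ‖f s‖ ^ 2 ≤ ∫ _ in (0 : ℝ)..tc, η ^ 2 :=
          integral_mono_on htc hf intervalIntegrable_const
            fun s hs => pow_le_pow_left₀ (norm_nonneg _) (hη s hs) 2
      _ = tc * η ^ 2 := by rw [intervalIntegral.integral_const, sub_zero, smul_eq_mul]
  have hsq : ‖y‖ ^ 2 ≤ tc / α * η ^ 2 := by
    rw [div_mul_eq_mul_div, le_div_iff₀ hα]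
    linarith
  calc ‖y‖ = |‖y‖| := (abs_norm y).symm
    _ ≤ √(tc / α * η ^ 2) := Real.abs_le_sqrt hsq
    _ = √(tc / α) * η := by rw [Real.sqrt_mul' _ (sq_nonneg η), Real.sqrt_sq hη0]

section

variable {E F : Type*} [NormedAddCommGroup E] [NormedSpace ℝ E] [NormedAddCommGroup F]
  [NormedSpace ℝ F]

theorem norm_apply_add_le_mul_add_one (L : E →L[ℝ] F) {x : E} {v : F} {δ B : ℝ}
    (hL : ‖L‖ ≤ δ) (hx : ‖x‖ ≤ B) (hv : ‖v‖ ≤ δ) : ‖L x + v‖ ≤ δ * (B + 1) :=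
  calc ‖L x + v‖ ≤ ‖L x‖ + ‖v‖ := norm_add_le _ _
    _ ≤ δ * B + δ := add_le_add (L.le_of_opNorm_le_of_le hL hx) hv
    _ = δ * (B + 1) := by ring

variable [CompleteSpace E] (A : E →L[ℝ] E)

theorem hasDerivAt_exp_neg_smul_apply {μ : ℝ → E} {r : E} {u : ℝ}
    (hμ : HasDerivAt μ (A (μ u) + r) u) :
    HasDerivAt (fun v => exp ((-v) • A) (μ v)) (exp ((-u) • A) r) u := by
  have hexp := (hasDerivAt_exp_smul_const A (-u)).scomp u (hasDerivAt_neg u)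
  rw [neg_one_smul] at hexp
  refine (hexp.clm_apply hμ).congr_deriv ?_
  change -(exp ((-u) • A) (A (μ u))) + exp ((-u) • A) (A (μ u) + r) = _
  rw [map_add, neg_add_cancel_left]

/-- Variation of constants: `u ↦ exp (-u • A) (μ u)` has derivative `exp (-u • A) (r u)`. -/
theorem norm_exp_smul_apply_sub_le_s9 {μ r : ℝ → E} {s M K : ℝ} (hs : 0 ≤ s)
    (hμ : ∀ u ∈ Icc 0 s, HasDerivAt μ (A (μ u) + r u) u) (hr : ∀ u ∈ Icc 0 s, ‖r u‖ ≤ K)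
    (hM : ∀ u ∈ Icc (-s) s, ‖exp (u • A)‖ ≤ M) :
    ‖exp (s • A) (μ 0) - μ s‖ ≤ M * (M * K * s) := by
  set g : ℝ → E := fun v => exp ((-v) • A) (μ v)
  have hg : ‖g s - g 0‖ ≤ M * K * s := by
    simpa only [sub_zero] using norm_image_sub_le_of_norm_deriv_le_segment'
      (fun u hu => (hasDerivAt_exp_neg_smul_apply A (hμ u hu)).hasDerivWithinAt)
      (fun u hu => (exp ((-u) • A)).le_of_opNorm_le_of_le
        (hM _ ⟨by linarith [hu.2], by linarith [hu.1]⟩) (hr u (Ico_subset_Icc_self hu)))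
      s ⟨hs, le_rfl⟩
  have hgs : exp (s • A) (g s) = μ s := by
    change (exp (s • A) * exp ((-s) • A)) (μ s) = μ s
    rw [exp_smul_mul_exp_neg_smul A s, one_apply_eq_self]
  have hg0 : g 0 = μ 0 := by simp [g]
  calc ‖exp (s • A) (μ 0) - μ s‖ = ‖exp (s • A) (g s - g 0)‖ := by
        rw [map_sub, hgs, hg0, norm_sub_rev]
    _ ≤ M * (M * K * s) :=
        (exp (s • A)).le_of_opNorm_le_of_le (hM s ⟨by linarith, le_rfl⟩) hg

end

section ObservationWindow

variable {Y U : Type*} [NormedAddCommGroup Y] [NormedSpace ℝ Y] [CompleteSpace Y]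
  [NormedAddCommGroup U] [NormedSpace ℝ U] (A : Y →L[ℝ] Y) (C : Y →L[ℝ] U) {lam : ℝ → Y}
  {p : ℝ → Y →L[ℝ] Y} {m : ℝ → Y →L[ℝ] U} {q : ℝ → Y} {n : ℝ → U} {t tc B δ M : ℝ}

theorem norm_observation_le_of_perturbed_extremal
    (hode : ∀ s ∈ Icc (t - tc) t, HasDerivAt lam (-(A (lam s)) - (p s) (lam s) + q s) s)
    (halg : ∀ s ∈ Icc (t - tc) t, (0 : U) = C (lam s) + (m s) (lam s) + n s)
    (hB : ∀ s ∈ Icc (t - tc) t, ‖lam s‖ ≤ B)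
    (hδ : ∀ s ∈ Icc (t - tc) t, ‖p s‖ ≤ δ ∧ ‖q s‖ ≤ δ ∧ ‖m s‖ ≤ δ ∧ ‖n s‖ ≤ δ)
    (hM : ∀ u ∈ Icc (-tc) tc, ‖exp (u • A)‖ ≤ M) {s : ℝ} (hs : s ∈ Icc 0 tc) :
    ‖C (exp (s • A) (lam t))‖ ≤ (‖C‖ * M ^ 2 * tc + 1) * (B + 1) * δ := by
  have hwin : ∀ u ∈ Icc 0 s, t - u ∈ Icc (t - tc) t := fun u hu =>
    ⟨by linarith [hu.2, hs.2], by linarith [hu.1]⟩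
  have hback : ∀ u ∈ Icc 0 s, HasDerivAt (fun v => lam (t - v))
      (A (lam (t - u)) + ((p (t - u)) (lam (t - u)) + -q (t - u))) u := fun u hu =>
    ((hode _ (hwin u hu)).comp_const_sub t u).congr_deriv (by abel)
  have hfree : ‖exp (s • A) (lam t) - lam (t - s)‖ ≤ M * (M * (δ * (B + 1)) * s) := by
    simpa using norm_exp_smul_apply_sub_le_s9 A hs.1 hback
      (fun u hu => norm_apply_add_le_mul_add_one _ (hδ _ (hwin u hu)).1 (hB _ (hwin u hu))
        ((norm_neg _).trans_le (hδ _ (hwin u hu)).2.1))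
      (fun u hu => hM u ⟨by linarith [hu.1, hs.2], hu.2.trans hs.2⟩)
  have hend := hwin s ⟨hs.1, le_rfl⟩
  have hC : ‖C (lam (t - s))‖ ≤ δ * (B + 1) := by
    rw [eq_neg_of_add_eq_zero_left ((add_assoc _ _ _).symm.trans (halg _ hend).symm), norm_neg]
    exact norm_apply_add_le_mul_add_one _ (hδ _ hend).2.2.1 (hB _ hend) (hδ _ hend).2.2.2
  have hδ0 : 0 ≤ δ := (norm_nonneg _).trans (hδ _ hend).1
  have hB0 : 0 ≤ B := (norm_nonneg _).trans (hB _ hend)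
  have hM0 : 0 ≤ M := (norm_nonneg _).trans (hM 0 ⟨by linarith [hs.1, hs.2], hs.1.trans hs.2⟩)
  calc ‖C (exp (s • A) (lam t))‖
      ≤ ‖C (exp (s • A) (lam t) - lam (t - s))‖ + ‖C (lam (t - s))‖ := by
        simpa only [map_sub, sub_add_cancel] using
          norm_add_le (C (exp (s • A) (lam t) - lam (t - s))) (C (lam (t - s)))
    _ ≤ ‖C‖ * (M * (M * (δ * (B + 1)) * s)) + δ * (B + 1) :=
        add_le_add (C.le_of_opNorm_le_of_le le_rfl hfree) hC
    _ ≤ ‖C‖ * (M * (M * (δ * (B + 1)) * tc)) + δ * (B + 1) := by gcongr; exact hs.2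
    _ = (‖C‖ * M ^ 2 * tc + 1) * (B + 1) * δ := by ring

theorem norm_le_of_observability_of_perturbed_extremal {α : ℝ} (htc : 0 ≤ tc) (hα : 0 < α)
    (hobs : α * ‖lam t‖ ^ 2 ≤ ∫ s in (0 : ℝ)..tc, ‖C (exp (s • A) (lam t))‖ ^ 2)
    (hode : ∀ s ∈ Icc (t - tc) t, HasDerivAt lam (-(A (lam s)) - (p s) (lam s) + q s) s)
    (halg : ∀ s ∈ Icc (t - tc) t, (0 : U) = C (lam s) + (m s) (lam s) + n s)
    (hB : ∀ s ∈ Icc (t - tc) t, ‖lam s‖ ≤ B)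
    (hδ : ∀ s ∈ Icc (t - tc) t, ‖p s‖ ≤ δ ∧ ‖q s‖ ≤ δ ∧ ‖m s‖ ≤ δ ∧ ‖n s‖ ≤ δ)
    (hM : ∀ u ∈ Icc (-tc) tc, ‖exp (u • A)‖ ≤ M) :
    ‖lam t‖ ≤ √(tc / α) * ((‖C‖ * M ^ 2 * tc + 1) * (B + 1)) * δ := by
  have hcont : Continuous fun s : ℝ => ‖C (exp (s • A) (lam t))‖ ^ 2 :=
    ((C.continuous.comp ((differentiable_exp_smul_const ℝ A).continuous.clm_apply
      continuous_const)).norm).pow 2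
  rw [mul_assoc]
  exact norm_le_of_observability _ htc hα (hcont.intervalIntegrable _ _) hobs
    fun s hs => norm_observation_le_of_perturbed_extremal A C hode halg hB hδ hM hs

end ObservationWindow

theorem adjoint_interval_turnpike_of_observability_general
    {Y U : Type*} [NormedAddCommGroup Y] [InnerProductSpace ℝ Y] [CompleteSpace Y]
    [NormedAddCommGroup U] [InnerProductSpace ℝ U]
    (A : Y →L[ℝ] Y) (C : Y →L[ℝ] U) (tc α : ℝ) (htc : 0 < tc) (hα : 0 < α)
    (hobs : ∀ y : Y,
      α * ‖y‖ ^ 2 ≤ ∫ s in (0:ℝ)..tc, ‖C ((NormedSpace.exp (s • A)) y)‖ ^ 2)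
    (t₁ t₂ : ℝ → ℝ)
    (lam : ℝ → ℝ → Y)
    (p : ℝ → ℝ → (Y →L[ℝ] Y)) (m : ℝ → ℝ → (Y →L[ℝ] U))
    (q : ℝ → ℝ → Y) (nn : ℝ → ℝ → U)
    (hode : ∀ T > (0 : ℝ), ∀ s ∈ Set.Icc (t₁ T) (t₂ T),
      HasDerivAt (lam T) (-(A (lam T s)) - (p T s) (lam T s) + q T s) s)
    (halg : ∀ T > (0 : ℝ), ∀ s ∈ Set.Icc (t₁ T) (t₂ T),
      (0 : U) = C (lam T s) + (m T s) (lam T s) + nn T s)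
    (hbdd : ∃ B : ℝ, ∀ T > (0 : ℝ), ∀ t ∈ Set.Icc (t₁ T) (t₂ T), ‖lam T t‖ ≤ B)
    (hres : ∀ ε > (0 : ℝ), ∃ T₀ > (0 : ℝ), ∀ T ≥ T₀,
      ∀ s ∈ Set.Icc (t₁ T) (t₂ T),
        ‖p T s‖ ≤ ε ∧ ‖q T s‖ ≤ ε ∧ ‖m T s‖ ≤ ε ∧ ‖nn T s‖ ≤ ε) :
    ∀ ε > (0 : ℝ), ∃ T₀ > (0 : ℝ), ∀ T ≥ T₀,
      ∀ t ∈ Set.Icc (t₁ T + tc) (t₂ T), ‖lam T t‖ ≤ ε := by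
  intro ε hε
  obtain ⟨B, hB⟩ := hbdd
  obtain ⟨M, hM⟩ : ∃ M, ∀ u ∈ Icc (-tc) tc, ‖exp (u • A)‖ ≤ M :=
    isCompact_Icc.exists_bound_of_continuousOn
      (differentiable_exp_smul_const ℝ A).continuous.continuousOn
  obtain ⟨δ, hδ, hKδ⟩ := exists_pos_mul_lt hε (√(tc / α) * ((‖C‖ * M ^ 2 * tc + 1) * (B + 1)))
  obtain ⟨T₀, hT₀, hsmall⟩ := hres δ hδ
  refine ⟨T₀, hT₀, fun T hT t ht => ?_⟩
  have hTpos : 0 < T := hT₀.trans_le hT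
  have hwin : Icc (t - tc) t ⊆ Icc (t₁ T) (t₂ T) := Icc_subset_Icc (by linarith [ht.1]) ht.2
  exact (norm_le_of_observability_of_perturbed_extremal A C htc.le hα (hobs _)
    (fun s hs => hode T hTpos s (hwin hs)) (fun s hs => halg T hTpos s (hwin hs))
    (fun s hs => hB T hTpos s (hwin hs)) (fun s hs => hsmall T hT s (hwin hs)) hM).trans hKδ.le

/-- (Interval turnpike for adjoints under exact controllability,
bounded-generator form.) Under the observability inequality for `(A, C)` with
constants `α, t_c`, uniformly bounded adjoint trajectories of the perturbed
extremal equations with uniformly vanishing remainder terms become uniformly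
small on `[t₁(T) + t_c, t₂(T)]` as `T → ∞`. -/
theorem adjoint_interval_turnpike_of_observability
    {Y U : Type*} [NormedAddCommGroup Y] [InnerProductSpace ℝ Y] [CompleteSpace Y]
    [NormedAddCommGroup U] [InnerProductSpace ℝ U] [CompleteSpace U]
    (A : Y →L[ℝ] Y) (C : Y →L[ℝ] U) (tc α : ℝ) (htc : 0 < tc) (hα : 0 < α)
    (hobs : ∀ y : Y,
      α * ‖y‖ ^ 2 ≤ ∫ s in (0:ℝ)..tc, ‖C ((NormedSpace.exp (s • A)) y)‖ ^ 2)
    (t₁ t₂ : ℝ → ℝ) (ht₁ : ∀ T, 0 ≤ t₁ T) (ht₁₂ : ∀ T, t₁ T ≤ t₂ T)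
    (ht₂ : ∀ T, t₂ T ≤ T)
    (hgrow : Tendsto (fun T => t₂ T - t₁ T) atTop atTop)
    (lam : ℝ → ℝ → Y)
    (hdiff : ∀ T > (0 : ℝ), Differentiable ℝ (lam T))
    (p : ℝ → ℝ → (Y →L[ℝ] Y)) (m : ℝ → ℝ → (Y →L[ℝ] U))
    (q : ℝ → ℝ → Y) (nn : ℝ → ℝ → U)
    (hp : ∀ T > (0 : ℝ), Continuous (p T)) (hm : ∀ T > (0 : ℝ), Continuous (m T))
    (hq : ∀ T > (0 : ℝ), Continuous (q T)) (hn : ∀ T > (0 : ℝ), Continuous (nn T))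
    (hode : ∀ T > (0 : ℝ), ∀ s ∈ Set.Icc (t₁ T) (t₂ T),
      HasDerivAt (lam T) (-(A (lam T s)) - (p T s) (lam T s) + q T s) s)
    (halg : ∀ T > (0 : ℝ), ∀ s ∈ Set.Icc (t₁ T) (t₂ T),
      (0 : U) = C (lam T s) + (m T s) (lam T s) + nn T s)
    (hbdd : ∃ B : ℝ, ∀ T > (0 : ℝ), ∀ t ∈ Set.Icc (t₁ T) (t₂ T), ‖lam T t‖ ≤ B)
    (hres : ∀ ε > (0 : ℝ), ∃ T₀ > (0 : ℝ), ∀ T ≥ T₀,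
      ∀ s ∈ Set.Icc (t₁ T) (t₂ T),
        ‖p T s‖ ≤ ε ∧ ‖q T s‖ ≤ ε ∧ ‖m T s‖ ≤ ε ∧ ‖nn T s‖ ≤ ε) :
    ∀ ε > (0 : ℝ), ∃ T₀ > (0 : ℝ), ∀ T ≥ T₀,
      ∀ t ∈ Set.Icc (t₁ T + tc) (t₂ T), ‖lam T t‖ ≤ ε :=
  adjoint_interval_turnpike_of_observability_general A C tc α htc hα hobs t₁ t₂ lam p m q nn hode
    halg hbdd hres
end

section
/- Let Y_u be a finite-dimensional real Hilbert space, Y_s a real Hilbert space, and U a real Hilbert space. Let A_u : Y_u → Y_u, A_s : Y_s → Y_s, C_u : Y_u → U, C_s : Y_s → U be bounded linear operators such that (a) ‖exp(s·A_s)‖ ≤ M e^{−μ s} for all s ≥ 0 with M ≥ 1, μ > 0, and (b) there are t_c > 0, α > 0 with ∫_0^{t_c} ‖C_u(exp(s·A_u) y)‖_U² ds ≥ α ‖y‖² for all y ∈ Y_u. Let t₁, t₂ : ℝ_{≥0} → ℝ_{≥0} satisfy t₁(T) ≤ t₂(T) ≤ T and t₂(T) − t₁(T) → ∞ as T → ∞.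 For each T > 0 let λ_u^T : ℝ → Y_u and λ_s^T : ℝ → Y_s be differentiable and satisfy on [t₁(T), t₂(T)] the coupled system λ_u^T′ = −A_u λ_u^T − p₁(s)λ_u^T − p₂(s)λ_s^T + q₁(s), λ_s^T′ = −A_s λ_s^T − p₃(s)λ_u^T − p₄(s)λ_s^T + q₂(s), 0 = C_u λ_u^T + C_s λ_s^T + m₁(s)λ_u^T + m₂(s)λ_s^T + n(s), where the operator-valued coefficients p₁,…,p₄, m₁, m₂ and the vector-valued terms q₁, q₂, n are continuous with suprema over [t₁(T), t₂(T)] tending to 0 as T → ∞, and assume sup_T sup_{t ∈ [t₁(T),t₂(T)]} (‖λ_u^T(t)‖ + ‖λ_s^T(t)‖) < ∞. Then for every ε > 0 there exists T₀ > 0 such that for all T ≥ T₀ and all t ∈ [t₁(T) + t_c, t₁(T) + (t₂(T) − t₁(T))/2], ‖λ_u^T(t)‖ + ‖λ_s^T(t)‖ ≤ ε. -/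
open MeasureTheory intervalIntegral Filter

open Set Topology

/-!
On the turnpike interval the system is driven by remainder terms of size `δ (B + 1)`. The
derivative of `τ ↦ exp ((τ - a) • A) (f τ)` is `exp ((τ - a) • A) (g τ)`, so variation of constants
over a window of length `ℓ` bounds the stable component by `M (e^{-μℓ} B + ℓ δ (B + 1))`. On
`[t - t_c, t]` the algebraic constraint turns this into a bound on `C_u λ_u`, which variation of
constants transports to `C_u (exp (s • A_u) λ_u(t))`, and exact observability converts into a bound
on `λ_u(t)`. Choosing `ℓ` large and then `δ` small makes the total at most `ε`.
-/

section Duhamel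

variable {E : Type*} [NormedAddCommGroup E] [NormedSpace ℝ E] [CompleteSpace E]
  {A : E →L[ℝ] E} {f g : ℝ → E}

theorem hasDerivAt_exp_smul_apply_of_hasDerivAt {a σ : ℝ}
    (hf : HasDerivAt f (-(A (f σ)) + g σ) σ) :
    HasDerivAt (fun τ => NormedSpace.exp ((τ - a) • A) (f τ))
      (NormedSpace.exp ((σ - a) • A) (g σ)) σ := by
  have hexp := (hasDerivAt_exp_smul_const (𝕂 := ℝ) A (σ - a)).comp_sub_const σ a
  convert hexp.clm_apply hf using 1
  simp

variable (A) in
theorem exists_norm_exp_smul_le (τ : ℝ) : ∃ K, ∀ σ ∈ Icc 0 τ, ‖NormedSpace.exp (σ • A)‖ ≤ K :=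
  isCompact_Icc.exists_bound_of_continuousOn
    (continuous_iff_continuousAt.2 fun σ =>
      (hasDerivAt_exp_smul_const (𝕂 := ℝ) A σ).continuousAt).continuousOn

theorem norm_exp_smul_apply_sub_le_s10 {a b K η : ℝ} (hab : a ≤ b)
    (hf : ∀ σ ∈ Icc a b, HasDerivAt f (-(A (f σ)) + g σ) σ)
    (hK : ∀ σ ∈ Ico a b, ‖NormedSpace.exp ((σ - a) • A)‖ ≤ K)
    (hg : ∀ σ ∈ Ico a b, ‖g σ‖ ≤ η) :
    ‖NormedSpace.exp ((b - a) • A) (f b) - f a‖ ≤ K * η * (b - a) := by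
  have key := norm_image_sub_le_of_norm_deriv_le_segment'
    (f := fun τ => NormedSpace.exp ((τ - a) • A) (f τ))
    (fun σ hσ => (hasDerivAt_exp_smul_apply_of_hasDerivAt (hf σ hσ)).hasDerivWithinAt)
    (fun σ hσ => (ContinuousLinearMap.le_opNorm _ _).trans <|
      mul_le_mul (hK σ hσ) (hg σ hσ) (norm_nonneg _) ((norm_nonneg _).trans (hK σ hσ)))
    b (right_mem_Icc.2 hab)
  simpa [mul_assoc] using key

theorem norm_stable_le_of_exp_decay {M μ a b B η ℓ : ℝ} (hμ : 0 ≤ μ)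
    (hstab : ∀ s : ℝ, 0 ≤ s → ‖NormedSpace.exp (s • A)‖ ≤ M * Real.exp (-μ * s))
    (hf : ∀ σ ∈ Icc a b, HasDerivAt f (-(A (f σ)) + g σ) σ)
    (hg : ∀ σ ∈ Icc a b, ‖g σ‖ ≤ η) (hB : ∀ σ ∈ Icc a b, ‖f σ‖ ≤ B) (hℓ : 0 ≤ ℓ)
    {s : ℝ} (hs : s ∈ Icc a (b - ℓ)) :
    ‖f s‖ ≤ M * (Real.exp (-μ * ℓ) * B + ℓ * η) := by
  have hsub : Icc s (s + ℓ) ⊆ Icc a b := Icc_subset_Icc hs.1 (by linarith [hs.2])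
  have hM₀ : 0 ≤ M := (norm_nonneg _).trans (by simpa using hstab 0 le_rfl)
  have hM : ∀ σ : ℝ, 0 ≤ σ → ‖NormedSpace.exp (σ • A)‖ ≤ M := fun σ hσ =>
    (hstab σ hσ).trans (mul_le_of_le_one_right hM₀ (Real.exp_le_one_iff.2 (by nlinarith)))
  have hduhamel := norm_exp_smul_apply_sub_le_s10 (by linarith) (fun σ hσ => hf σ (hsub hσ))
    (fun σ hσ => hM _ (sub_nonneg.2 hσ.1)) (fun σ hσ => hg σ (hsub (Ico_subset_Icc_self hσ)))
  have hend : ‖NormedSpace.exp (ℓ • A) (f (s + ℓ))‖ ≤ M * Real.exp (-μ * ℓ) * B :=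
    (ContinuousLinearMap.le_opNorm _ _).trans <| mul_le_mul (hstab ℓ hℓ)
      (hB _ (hsub (right_mem_Icc.2 (by linarith)))) (norm_nonneg _) (by positivity)
  rw [add_sub_cancel_left] at hduhamel
  calc ‖f s‖ ≤ ‖NormedSpace.exp (ℓ • A) (f (s + ℓ))‖
        + ‖NormedSpace.exp (ℓ • A) (f (s + ℓ)) - f s‖ := norm_le_insert _ _
    _ ≤ M * (Real.exp (-μ * ℓ) * B + ℓ * η) := by linarith

end Duhamel

theorem norm_le_of_observable {Y U : Type*} [NormedAddCommGroup Y] [NormedSpace ℝ Y]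
    [NormedAddCommGroup U] [NormedSpace ℝ U] {A : Y →L[ℝ] Y} {C : Y →L[ℝ] U} {tc α κ : ℝ}
    (htc : 0 ≤ tc) (hα : 0 < α) {y : Y}
    (hobs : α * ‖y‖ ^ 2 ≤ ∫ s in (0 : ℝ)..tc, ‖C (NormedSpace.exp (s • A) y)‖ ^ 2)
    (hκ : ∀ s ∈ Icc 0 tc, ‖C (NormedSpace.exp (s • A) y)‖ ≤ κ) :
    ‖y‖ ≤ √(tc / α) * κ := by
  have hκ₀ : 0 ≤ κ := (norm_nonneg _).trans (hκ 0 (left_mem_Icc.2 htc))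
  have hint : ∫ s in (0 : ℝ)..tc, ‖C (NormedSpace.exp (s • A) y)‖ ^ 2 ≤ κ ^ 2 * tc := by
    refine (Real.le_norm_self _).trans <|
      (intervalIntegral.norm_integral_le_of_norm_le_const (C := κ ^ 2) fun s hs => ?_).trans_eq ?_
    · rw [uIoc_of_le htc] at hs
      rw [Real.norm_eq_abs, abs_pow, abs_norm]
      exact pow_le_pow_left₀ (norm_nonneg _) (hκ s (Ioc_subset_Icc_self hs)) 2
    · rw [sub_zero, abs_of_nonneg htc]
  rw [← Real.sqrt_sq (norm_nonneg y), ← Real.sqrt_sq hκ₀, ← Real.sqrt_mul (by positivity)]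
  refine Real.sqrt_le_sqrt ?_
  rw [div_mul_eq_mul_div, le_div_iff₀ hα]
  nlinarith

section Turnpike

variable {Yu Ys U : Type*} [NormedAddCommGroup Yu] [NormedSpace ℝ Yu] [CompleteSpace Yu]
  [NormedAddCommGroup Ys] [NormedSpace ℝ Ys]
  [NormedAddCommGroup U] [NormedSpace ℝ U]
  {Au : Yu →L[ℝ] Yu} {As : Ys →L[ℝ] Ys} {Cu : Yu →L[ℝ] U} {Cs : Ys →L[ℝ] U}
  {fu : ℝ → Yu} {fs : ℝ → Ys} {gu : ℝ → Yu} {gs : ℝ → Ys} {r : ℝ → U} {tc α K η : ℝ}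

theorem norm_unstable_le_of_observable
    (hK : ∀ σ ∈ Icc 0 tc, ‖NormedSpace.exp (σ • Au)‖ ≤ K) (htc : 0 ≤ tc) (hα : 0 < α)
    (hobs : ∀ y : Yu,
      α * ‖y‖ ^ 2 ≤ ∫ s in (0 : ℝ)..tc, ‖Cu (NormedSpace.exp (s • Au) y)‖ ^ 2)
    {t ρ : ℝ} (hfu : ∀ s ∈ Icc (t - tc) t, HasDerivAt fu (-(Au (fu s)) + gu s) s)
    (hgu : ∀ s ∈ Icc (t - tc) t, ‖gu s‖ ≤ η)
    (halg : ∀ s ∈ Icc (t - tc) t, Cu (fu s) + Cs (fs s) + r s = 0)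
    (hr : ∀ s ∈ Icc (t - tc) t, ‖r s‖ ≤ η) (hfs : ∀ s ∈ Icc (t - tc) t, ‖fs s‖ ≤ ρ) :
    ‖fu t‖ ≤ √(tc / α) * (‖Cs‖ * ρ + η + ‖Cu‖ * (K * η * tc)) := by
  have hK₀ : 0 ≤ K := (norm_nonneg _).trans (hK 0 (left_mem_Icc.2 htc))
  have hη : 0 ≤ η := (norm_nonneg _).trans (hgu t (right_mem_Icc.2 (by linarith)))
  refine norm_le_of_observable htc hα (hobs _) fun s hs => ?_
  have hsub : Icc (t - s) t ⊆ Icc (t - tc) t := Icc_subset_Icc_left (by linarith [hs.2])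
  have hts : t - s ∈ Icc (t - tc) t := hsub (left_mem_Icc.2 (by linarith [hs.1]))
  have hduhamel : ‖NormedSpace.exp (s • Au) (fu t) - fu (t - s)‖ ≤ K * η * tc := by
    have h := norm_exp_smul_apply_sub_le_s10 (by linarith [hs.1]) (fun σ hσ => hfu σ (hsub hσ))
      (fun σ hσ => hK _ ⟨by linarith [hσ.1], by linarith [hσ.2, hs.2]⟩)
      (fun σ hσ => hgu σ (hsub (Ico_subset_Icc_self hσ)))
    rw [sub_sub_cancel] at h
    exact h.trans (mul_le_mul_of_nonneg_left hs.2 (mul_nonneg hK₀ hη))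
  have hconstraint : ‖Cu (fu (t - s))‖ ≤ ‖Cs‖ * ρ + η := by
    rw [eq_neg_of_add_eq_zero_left ((add_assoc _ _ _).symm.trans (halg _ hts)), norm_neg]
    exact (norm_add_le _ _).trans (add_le_add ((Cs.le_opNorm _).trans
      (mul_le_mul_of_nonneg_left (hfs _ hts) (norm_nonneg _))) (hr _ hts))
  calc ‖Cu (NormedSpace.exp (s • Au) (fu t))‖
      = ‖Cu (fu (t - s)) + Cu (NormedSpace.exp (s • Au) (fu t) - fu (t - s))‖ := by
        rw [map_sub, add_sub_cancel]
    _ ≤ ‖Cu (fu (t - s))‖ + ‖Cu‖ * ‖NormedSpace.exp (s • Au) (fu t) - fu (t - s)‖ :=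
        (norm_add_le _ _).trans (add_le_add_right (Cu.le_opNorm _) _)
    _ ≤ ‖Cs‖ * ρ + η + ‖Cu‖ * (K * η * tc) :=
        add_le_add hconstraint (mul_le_mul_of_nonneg_left hduhamel (norm_nonneg _))

theorem norm_add_norm_le_of_detectable [CompleteSpace Ys] {M μ : ℝ} (hμ : 0 ≤ μ)
    (hstab : ∀ s : ℝ, 0 ≤ s → ‖NormedSpace.exp (s • As)‖ ≤ M * Real.exp (-μ * s))
    (hK : ∀ σ ∈ Icc 0 tc, ‖NormedSpace.exp (σ • Au)‖ ≤ K) (htc : 0 ≤ tc) (hα : 0 < α)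
    (hobs : ∀ y : Yu,
      α * ‖y‖ ^ 2 ≤ ∫ s in (0 : ℝ)..tc, ‖Cu (NormedSpace.exp (s • Au) y)‖ ^ 2)
    {a b B ℓ : ℝ} (hfu : ∀ s ∈ Icc a b, HasDerivAt fu (-(Au (fu s)) + gu s) s)
    (hfs : ∀ s ∈ Icc a b, HasDerivAt fs (-(As (fs s)) + gs s) s)
    (halg : ∀ s ∈ Icc a b, Cu (fu s) + Cs (fs s) + r s = 0)
    (hgu : ∀ s ∈ Icc a b, ‖gu s‖ ≤ η) (hgs : ∀ s ∈ Icc a b, ‖gs s‖ ≤ η)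
    (hr : ∀ s ∈ Icc a b, ‖r s‖ ≤ η) (hB : ∀ s ∈ Icc a b, ‖fu s‖ + ‖fs s‖ ≤ B)
    (hℓ : 0 ≤ ℓ) (hab : 2 * ℓ ≤ b - a) {t : ℝ} (ht : t ∈ Icc (a + tc) (a + (b - a) / 2)) :
    ‖fu t‖ + ‖fs t‖ ≤ (√(tc / α) * ‖Cs‖ + 1) * M * (Real.exp (-μ * ℓ) * B + ℓ * η)
      + √(tc / α) * (1 + ‖Cu‖ * K * tc) * η := by
  have hsub : Icc (t - tc) t ⊆ Icc a (b - ℓ) :=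
    Icc_subset_Icc (by linarith [ht.1]) (by linarith [ht.2])
  have hstable : ∀ s ∈ Icc a (b - ℓ), ‖fs s‖ ≤ M * (Real.exp (-μ * ℓ) * B + ℓ * η) :=
    fun s hs => norm_stable_le_of_exp_decay hμ hstab hfs hgs
      (fun σ hσ => (le_add_of_nonneg_left (norm_nonneg _)).trans (hB σ hσ)) hℓ hs
  have hwindow : Icc (t - tc) t ⊆ Icc a b := hsub.trans (Icc_subset_Icc_right (by linarith))
  have hunstable := norm_unstable_le_of_observable hK htc hα hobs
    (fun s hs => hfu s (hwindow hs)) (fun s hs => hgu s (hwindow hs))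
    (fun s hs => halg s (hwindow hs)) (fun s hs => hr s (hwindow hs))
    (fun s hs => hstable s (hsub hs))
  calc ‖fu t‖ + ‖fs t‖
      ≤ √(tc / α) * (‖Cs‖ * (M * (Real.exp (-μ * ℓ) * B + ℓ * η)) + η + ‖Cu‖ * (K * η * tc))
        + M * (Real.exp (-μ * ℓ) * B + ℓ * η) :=
        add_le_add hunstable (hstable t (hsub (right_mem_Icc.2 (by linarith))))
    _ = _ := by ring

end Turnpike

theorem norm_apply_add_apply_add_le {E F G : Type*} [SeminormedAddCommGroup E]
    [NormedSpace ℝ E] [SeminormedAddCommGroup F] [NormedSpace ℝ F] [SeminormedAddCommGroup G]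
    [NormedSpace ℝ G] {P : E →L[ℝ] G} {Q : F →L[ℝ] G} {q : G} {x : E} {y : F} {δ B : ℝ}
    (hP : ‖P‖ ≤ δ) (hQ : ‖Q‖ ≤ δ) (hq : ‖q‖ ≤ δ) (hxy : ‖x‖ + ‖y‖ ≤ B) :
    ‖P x + Q y + q‖ ≤ δ * (B + 1) := by
  have hδ : 0 ≤ δ := (norm_nonneg _).trans hq
  calc ‖P x + Q y + q‖ ≤ δ * ‖x‖ + δ * ‖y‖ + δ :=
        norm_add₃_le.trans (add_le_add_three (P.le_of_opNorm_le hP x) (Q.le_of_opNorm_le hQ y) hq)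
    _ ≤ δ * (B + 1) := by nlinarith

theorem exists_turnpike_params {μ ε : ℝ} (hμ : 0 < μ) (hε : 0 < ε) (P Q B : ℝ) :
    ∃ ℓ ≥ 0, ∃ δ > 0,
      P * (Real.exp (-μ * ℓ) * B + ℓ * (δ * (B + 1))) + Q * (δ * (B + 1)) < ε := by
  have hdecay : Tendsto (fun ℓ => P * (Real.exp (-μ * ℓ) * B)) atTop (𝓝 0) := by
    have h := ((Real.tendsto_exp_neg_atTop_nhds_zero.comp
      (tendsto_id.const_mul_atTop hμ)).mul_const B).const_mul P
    simpa [Function.comp_def, neg_mul] using h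
  obtain ⟨ℓ, hℓ₀, hℓ⟩ := ((eventually_ge_atTop 0).and (hdecay.eventually (gt_mem_nhds hε))).exists
  have hcont : ContinuousAt (fun δ : ℝ =>
      P * (Real.exp (-μ * ℓ) * B + ℓ * (δ * (B + 1))) + Q * (δ * (B + 1))) 0 := by
    fun_prop
  have hsmall := hcont.eventually (gt_mem_nhds (by simpa using hℓ))
  obtain ⟨δ, hδ, hδ₀⟩ := ((hsmall.filter_mono nhdsWithin_le_nhds).and
    (self_mem_nhdsWithin (s := Ioi 0))).exists
  exact ⟨ℓ, hℓ₀, δ, hδ₀, hδ⟩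

theorem adjoint_interval_turnpike_decomposed_general
    {Yu Ys U : Type*}
    [NormedAddCommGroup Yu] [InnerProductSpace ℝ Yu] [FiniteDimensional ℝ Yu]
    [NormedAddCommGroup Ys] [InnerProductSpace ℝ Ys] [CompleteSpace Ys]
    [NormedAddCommGroup U] [InnerProductSpace ℝ U]
    (Au : Yu →L[ℝ] Yu) (As : Ys →L[ℝ] Ys) (Cu : Yu →L[ℝ] U) (Cs : Ys →L[ℝ] U)
    (M μ : ℝ) (hμ : 0 < μ)
    (hstab : ∀ s : ℝ, 0 ≤ s → ‖NormedSpace.exp (s • As)‖ ≤ M * Real.exp (-μ * s))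
    (tc α : ℝ) (htc : 0 < tc) (hα : 0 < α)
    (hobs : ∀ y : Yu,
      α * ‖y‖ ^ 2 ≤ ∫ s in (0:ℝ)..tc, ‖Cu ((NormedSpace.exp (s • Au)) y)‖ ^ 2)
    (t₁ t₂ : ℝ → ℝ)
    (hgrow : Tendsto (fun T => t₂ T - t₁ T) atTop atTop)
    (lamu : ℝ → ℝ → Yu) (lams : ℝ → ℝ → Ys)
    (p₁ : ℝ → ℝ → (Yu →L[ℝ] Yu)) (p₂ : ℝ → ℝ → (Ys →L[ℝ] Yu))
    (p₃ : ℝ → ℝ → (Yu →L[ℝ] Ys)) (p₄ : ℝ → ℝ → (Ys →L[ℝ] Ys))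
    (m₁ : ℝ → ℝ → (Yu →L[ℝ] U)) (m₂ : ℝ → ℝ → (Ys →L[ℝ] U))
    (q₁ : ℝ → ℝ → Yu) (q₂ : ℝ → ℝ → Ys) (nn : ℝ → ℝ → U)
    (hodeu : ∀ T > (0 : ℝ), ∀ s ∈ Set.Icc (t₁ T) (t₂ T),
      HasDerivAt (lamu T)
        (-(Au (lamu T s)) - (p₁ T s) (lamu T s) - (p₂ T s) (lams T s) + q₁ T s) s)
    (hodes : ∀ T > (0 : ℝ), ∀ s ∈ Set.Icc (t₁ T) (t₂ T),
      HasDerivAt (lams T)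
        (-(As (lams T s)) - (p₃ T s) (lamu T s) - (p₄ T s) (lams T s) + q₂ T s) s)
    (halg : ∀ T > (0 : ℝ), ∀ s ∈ Set.Icc (t₁ T) (t₂ T),
      (0 : U) = Cu (lamu T s) + Cs (lams T s)
        + (m₁ T s) (lamu T s) + (m₂ T s) (lams T s) + nn T s)
    (hbdd : ∃ B : ℝ, ∀ T > (0 : ℝ), ∀ t ∈ Set.Icc (t₁ T) (t₂ T),
      ‖lamu T t‖ + ‖lams T t‖ ≤ B)
    (hres : ∀ ε > (0 : ℝ), ∃ T₀ > (0 : ℝ), ∀ T ≥ T₀,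
      ∀ s ∈ Set.Icc (t₁ T) (t₂ T),
        ‖p₁ T s‖ ≤ ε ∧ ‖p₂ T s‖ ≤ ε ∧ ‖p₃ T s‖ ≤ ε ∧ ‖p₄ T s‖ ≤ ε ∧
        ‖m₁ T s‖ ≤ ε ∧ ‖m₂ T s‖ ≤ ε ∧
        ‖q₁ T s‖ ≤ ε ∧ ‖q₂ T s‖ ≤ ε ∧ ‖nn T s‖ ≤ ε) :
    ∀ ε > (0 : ℝ), ∃ T₀ > (0 : ℝ), ∀ T ≥ T₀,
      ∀ t ∈ Set.Icc (t₁ T + tc) (t₁ T + (t₂ T - t₁ T) / 2),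
        ‖lamu T t‖ + ‖lams T t‖ ≤ ε := by
  intro ε hε
  obtain ⟨B, hB⟩ := hbdd
  obtain ⟨K, hK⟩ := exists_norm_exp_smul_le Au tc
  obtain ⟨ℓ, hℓ, δ, hδ, hbound⟩ := exists_turnpike_params hμ hε
    ((√(tc / α) * ‖Cs‖ + 1) * M) (√(tc / α) * (1 + ‖Cu‖ * K * tc)) B
  obtain ⟨T₁, hT₁, hsmall⟩ := hres δ hδ
  obtain ⟨T₂, hlong⟩ := eventually_atTop.mp (hgrow.eventually_ge_atTop (2 * ℓ))
  refine ⟨max T₁ T₂, hT₁.trans_le (le_max_left _ _), fun T hT t ht => ?_⟩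
  have hT₀ : 0 < T := hT₁.trans_le (le_of_max_le_left hT)
  have hrem : ∀ s ∈ Set.Icc (t₁ T) (t₂ T),
      ‖(-p₁ T s) (lamu T s) + (-p₂ T s) (lams T s) + q₁ T s‖ ≤ δ * (B + 1) ∧
      ‖(-p₃ T s) (lamu T s) + (-p₄ T s) (lams T s) + q₂ T s‖ ≤ δ * (B + 1) ∧
      ‖m₁ T s (lamu T s) + m₂ T s (lams T s) + nn T s‖ ≤ δ * (B + 1) := by
    intro s hs
    obtain ⟨h₁, h₂, h₃, h₄, h₅, h₆, h₇, h₈, h₉⟩ := hsmall T (le_of_max_le_left hT) s hs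
    rw [← norm_neg] at h₁ h₂ h₃ h₄
    exact ⟨norm_apply_add_apply_add_le h₁ h₂ h₇ (hB T hT₀ s hs),
      norm_apply_add_apply_add_le h₃ h₄ h₈ (hB T hT₀ s hs),
      norm_apply_add_apply_add_le h₅ h₆ h₉ (hB T hT₀ s hs)⟩
  refine (norm_add_norm_le_of_detectable hμ.le hstab hK htc.le hα hobs
    (fun s hs => (hodeu T hT₀ s hs).congr_deriv
      (by simp only [neg_apply]; abel))
    (fun s hs => (hodes T hT₀ s hs).congr_deriv
      (by simp only [neg_apply]; abel))
    (fun s hs => ((halg T hT₀ s hs).trans (by abel)).symm)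
    (fun s hs => (hrem s hs).1) (fun s hs => (hrem s hs).2.1) (fun s hs => (hrem s hs).2.2)
    (hB T hT₀) hℓ (hlong T (le_of_max_le_right hT)) ht).trans hbound.le

/-- (Adjoint turnpike for detectable systems with
finite-dimensional unstable part, decomposed bounded-generator form.) The adjoint
is split into an exactly observable finite-dimensional part `(A_u, C_u)` and an
exponentially stable part `A_s`; uniform boundedness and vanishing remainder
terms yield the interval turnpike property on
`[t₁(T) + t_c, t₁(T) + (t₂(T) − t₁(T))/2]`. -/
theorem adjoint_interval_turnpike_decomposed
    {Yu Ys U : Type*}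
    [NormedAddCommGroup Yu] [InnerProductSpace ℝ Yu] [FiniteDimensional ℝ Yu]
    [NormedAddCommGroup Ys] [InnerProductSpace ℝ Ys] [CompleteSpace Ys]
    [NormedAddCommGroup U] [InnerProductSpace ℝ U] [CompleteSpace U]
    (Au : Yu →L[ℝ] Yu) (As : Ys →L[ℝ] Ys) (Cu : Yu →L[ℝ] U) (Cs : Ys →L[ℝ] U)
    (M μ : ℝ) (hM : 1 ≤ M) (hμ : 0 < μ)
    (hstab : ∀ s : ℝ, 0 ≤ s → ‖NormedSpace.exp (s • As)‖ ≤ M * Real.exp (-μ * s))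
    (tc α : ℝ) (htc : 0 < tc) (hα : 0 < α)
    (hobs : ∀ y : Yu,
      α * ‖y‖ ^ 2 ≤ ∫ s in (0:ℝ)..tc, ‖Cu ((NormedSpace.exp (s • Au)) y)‖ ^ 2)
    (t₁ t₂ : ℝ → ℝ) (ht₁ : ∀ T, 0 ≤ t₁ T) (ht₁₂ : ∀ T, t₁ T ≤ t₂ T)
    (ht₂ : ∀ T, t₂ T ≤ T)
    (hgrow : Tendsto (fun T => t₂ T - t₁ T) atTop atTop)
    (lamu : ℝ → ℝ → Yu) (lams : ℝ → ℝ → Ys)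
    (hdiffu : ∀ T > (0 : ℝ), Differentiable ℝ (lamu T))
    (hdiffs : ∀ T > (0 : ℝ), Differentiable ℝ (lams T))
    (p₁ : ℝ → ℝ → (Yu →L[ℝ] Yu)) (p₂ : ℝ → ℝ → (Ys →L[ℝ] Yu))
    (p₃ : ℝ → ℝ → (Yu →L[ℝ] Ys)) (p₄ : ℝ → ℝ → (Ys →L[ℝ] Ys))
    (m₁ : ℝ → ℝ → (Yu →L[ℝ] U)) (m₂ : ℝ → ℝ → (Ys →L[ℝ] U))
    (q₁ : ℝ → ℝ → Yu) (q₂ : ℝ → ℝ → Ys) (nn : ℝ → ℝ → U)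
    (hp₁ : ∀ T > (0 : ℝ), Continuous (p₁ T)) (hp₂ : ∀ T > (0 : ℝ), Continuous (p₂ T))
    (hp₃ : ∀ T > (0 : ℝ), Continuous (p₃ T)) (hp₄ : ∀ T > (0 : ℝ), Continuous (p₄ T))
    (hm₁ : ∀ T > (0 : ℝ), Continuous (m₁ T)) (hm₂ : ∀ T > (0 : ℝ), Continuous (m₂ T))
    (hq₁ : ∀ T > (0 : ℝ), Continuous (q₁ T)) (hq₂ : ∀ T > (0 : ℝ), Continuous (q₂ T))
    (hn : ∀ T > (0 : ℝ), Continuous (nn T))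
    (hodeu : ∀ T > (0 : ℝ), ∀ s ∈ Set.Icc (t₁ T) (t₂ T),
      HasDerivAt (lamu T)
        (-(Au (lamu T s)) - (p₁ T s) (lamu T s) - (p₂ T s) (lams T s) + q₁ T s) s)
    (hodes : ∀ T > (0 : ℝ), ∀ s ∈ Set.Icc (t₁ T) (t₂ T),
      HasDerivAt (lams T)
        (-(As (lams T s)) - (p₃ T s) (lamu T s) - (p₄ T s) (lams T s) + q₂ T s) s)
    (halg : ∀ T > (0 : ℝ), ∀ s ∈ Set.Icc (t₁ T) (t₂ T),
      (0 : U) = Cu (lamu T s) + Cs (lams T s)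
        + (m₁ T s) (lamu T s) + (m₂ T s) (lams T s) + nn T s)
    (hbdd : ∃ B : ℝ, ∀ T > (0 : ℝ), ∀ t ∈ Set.Icc (t₁ T) (t₂ T),
      ‖lamu T t‖ + ‖lams T t‖ ≤ B)
    (hres : ∀ ε > (0 : ℝ), ∃ T₀ > (0 : ℝ), ∀ T ≥ T₀,
      ∀ s ∈ Set.Icc (t₁ T) (t₂ T),
        ‖p₁ T s‖ ≤ ε ∧ ‖p₂ T s‖ ≤ ε ∧ ‖p₃ T s‖ ≤ ε ∧ ‖p₄ T s‖ ≤ ε ∧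
        ‖m₁ T s‖ ≤ ε ∧ ‖m₂ T s‖ ≤ ε ∧
        ‖q₁ T s‖ ≤ ε ∧ ‖q₂ T s‖ ≤ ε ∧ ‖nn T s‖ ≤ ε) :
    ∀ ε > (0 : ℝ), ∃ T₀ > (0 : ℝ), ∀ T ≥ T₀,
      ∀ t ∈ Set.Icc (t₁ T + tc) (t₁ T + (t₂ T - t₁ T) / 2),
        ‖lamu T t‖ + ‖lams T t‖ ≤ ε :=
  adjoint_interval_turnpike_decomposed_general Au As Cu Cs M μ hμ hstab tc α htc hα hobs t₁ t₂ hgrow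
    lamu lams p₁ p₂ p₃ p₄ m₁ m₂ q₁ q₂ nn hodeu hodes halg hbdd hres
end

section
/- Let Y and U be real Hilbert spaces, A : Y → Y and C : Y → U bounded linear operators, t_c > 0, t ≥ t_c, and w : ℝ → Y continuous. Set K := sup_{s ∈ [0, t_c]} ‖exp(s·A)‖. Then ∫_{t−t_c}^{t} ‖C( ∫_s^t exp((τ−s)·A) w(τ) dτ )‖_U² ds ≤ ‖C‖² K² t_c² ∫_{t−t_c}^{t} ‖w(τ)‖_Y² dτ. -/
open MeasureTheory intervalIntegral

/-!
The exponentials `exp ((τ - s) • A)` occurring in the Duhamel term are bounded by `K` because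
`τ - s ∈ [0, t_c]`, so the inner integral has norm at most `K ∫_s^t ‖w‖`. By Cauchy–Schwarz,
`(∫_s^t ‖w‖)² ≤ (t - s) ∫_s^t ‖w‖² ≤ t_c ∫_{t-t_c}^t ‖w‖²`, which bounds the outer integrand
uniformly in `s`; integrating this constant over a window of length `t_c` gives the claim.
-/

theorem IsCompact.le_ciSup_of_continuousOn {X : Type*} [TopologicalSpace X] {s : Set X}
    {f : X → ℝ} {x : X} (hs : IsCompact s) (hf : ContinuousOn f s) (hx : x ∈ s) :
    f x ≤ ⨆ y : s, f y :=
  le_ciSup (Set.image_eq_range f s ▸ (hs.image_of_continuousOn hf).bddAbove) ⟨x, hx⟩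

theorem continuous_exp_smul_const {𝕂 𝔸 : Type*} [RCLike 𝕂] [NormedRing 𝔸] [NormedAlgebra 𝕂 𝔸]
    [CompleteSpace 𝔸] (x : 𝔸) : Continuous fun u : 𝕂 => NormedSpace.exp (u • x) :=
  continuous_iff_continuousAt.2 fun t => (hasDerivAt_exp_smul_const x t).continuousAt

theorem sq_intervalIntegral_le_mul_intervalIntegral_sq {f : ℝ → ℝ} {a b : ℝ} (hab : a ≤ b)
    (hf : IntervalIntegrable f volume a b)
    (hf2 : IntervalIntegrable (fun x => f x ^ 2) volume a b) :
    (∫ x in a..b, f x) ^ 2 ≤ (b - a) * ∫ x in a..b, f x ^ 2 := by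
  set m := ∫ x in a..b, f x
  set c := b - a
  rcases hab.eq_or_lt with rfl | hlt
  · simp [m]
  have hc : 0 < c := sub_pos.2 hlt
  have hvar : 0 ≤ ∫ x in a..b, (c * f x - m) ^ 2 :=
    integral_nonneg hab fun _ _ => sq_nonneg _
  have hexpand : ∫ x in a..b, (c * f x - m) ^ 2 =
      c * (c * ∫ x in a..b, f x ^ 2) - c * m ^ 2 := by
    have hsq := hf2.const_mul (c ^ 2)
    have hlin := hf.const_mul (2 * c * m)
    rw [show (fun x => (c * f x - m) ^ 2) = fun x => c ^ 2 * f x ^ 2 - 2 * c * m * f x + m ^ 2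
        from funext fun x => by ring,
      intervalIntegral.integral_add (hsq.sub hlin) intervalIntegrable_const,
      intervalIntegral.integral_sub hsq hlin, intervalIntegral.integral_const_mul,
      intervalIntegral.integral_const_mul, intervalIntegral.integral_const, smul_eq_mul]
    ring
  nlinarith

theorem norm_intervalIntegral_apply_le {E F : Type*} [NormedAddCommGroup E] [NormedSpace ℝ E]
    [NormedAddCommGroup F] [NormedSpace ℝ F] {T : ℝ → E →L[ℝ] F} {w : ℝ → E} {a b K : ℝ}
    (hab : a ≤ b) (hT : ∀ τ ∈ Set.Ioc a b, ‖T τ‖ ≤ K)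
    (hw : IntervalIntegrable (fun τ => ‖w τ‖) volume a b) :
    ‖∫ τ in a..b, T τ (w τ)‖ ≤ K * ∫ τ in a..b, ‖w τ‖ := by
  rw [← intervalIntegral.integral_const_mul]
  exact norm_integral_le_of_norm_le hab
    (ae_of_all _ fun τ hτ => (T τ).le_of_opNorm_le (hT τ hτ) _) (hw.const_mul K)

theorem norm_apply_duhamel_sq_le {Y U : Type*} [NormedAddCommGroup Y] [NormedSpace ℝ Y]
    [NormedAddCommGroup U] [NormedSpace ℝ U] (A : Y →L[ℝ] Y) (C : Y →L[ℝ] U) {w : ℝ → Y}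
    (hw : Continuous w) {tc t s K : ℝ}
    (hK : ∀ r ∈ Set.Icc 0 tc, ‖NormedSpace.exp (r • A)‖ ≤ K) (hs : s ∈ Set.Icc (t - tc) t) :
    ‖C (∫ τ in s..t, NormedSpace.exp ((τ - s) • A) (w τ))‖ ^ 2 ≤
      ‖C‖ ^ 2 * K ^ 2 * (tc * ∫ τ in (t - tc)..t, ‖w τ‖ ^ 2) := by
  obtain ⟨hts, hst⟩ := hs
  set X := ∫ τ in s..t, ‖w τ‖
  have hduhamel : ‖∫ τ in s..t, NormedSpace.exp ((τ - s) • A) (w τ)‖ ≤ K * X :=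
    norm_intervalIntegral_apply_le hst
      (fun τ hτ => hK _ ⟨by linarith [hτ.1], by linarith [hτ.2]⟩)
      (hw.norm.intervalIntegrable _ _)
  have hwsq : Continuous fun τ => ‖w τ‖ ^ 2 := hw.norm.pow 2
  have hcauchy : X ^ 2 ≤ tc * ∫ τ in (t - tc)..t, ‖w τ‖ ^ 2 :=
    calc X ^ 2 ≤ (t - s) * ∫ τ in s..t, ‖w τ‖ ^ 2 :=
          sq_intervalIntegral_le_mul_intervalIntegral_sq hst (hw.norm.intervalIntegrable _ _)
            (hwsq.intervalIntegrable _ _)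
      _ ≤ tc * ∫ τ in (t - tc)..t, ‖w τ‖ ^ 2 := by
          refine mul_le_mul (by linarith) ?_ ?_ (by linarith)
          · exact intervalIntegral.integral_mono_interval hts hst le_rfl
              (ae_of_all _ fun _ => by positivity) (hwsq.intervalIntegrable _ _)
          · exact intervalIntegral.integral_nonneg hst fun _ _ => by positivity
  calc ‖C (∫ τ in s..t, NormedSpace.exp ((τ - s) • A) (w τ))‖ ^ 2
      ≤ (‖C‖ * (K * X)) ^ 2 := by
        gcongr
        exact C.le_of_opNorm_le_of_le le_rfl hduhamel
    _ = ‖C‖ ^ 2 * K ^ 2 * X ^ 2 := by ring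
    _ ≤ ‖C‖ ^ 2 * K ^ 2 * (tc * ∫ τ in (t - tc)..t, ‖w τ‖ ^ 2) := by gcongr

theorem duhamel_output_estimate_general
    {Y U : Type*} [NormedAddCommGroup Y] [InnerProductSpace ℝ Y] [CompleteSpace Y]
    [NormedAddCommGroup U] [InnerProductSpace ℝ U]
    (A : Y →L[ℝ] Y) (C : Y →L[ℝ] U) (tc t : ℝ) (htc : 0 < tc)
    (w : ℝ → Y) (hw : Continuous w)
    (K : ℝ) (hK : K = ⨆ s : Set.Icc (0 : ℝ) tc, ‖NormedSpace.exp ((s : ℝ) • A)‖) :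
    ∫ s in (t - tc)..t,
        ‖C (∫ τ in s..t, (NormedSpace.exp ((τ - s) • A)) (w τ))‖ ^ 2 ≤
      ‖C‖ ^ 2 * K ^ 2 * tc ^ 2 * ∫ τ in (t - tc)..t, ‖w τ‖ ^ 2 := by
  have hK_bound : ∀ r ∈ Set.Icc 0 tc, ‖NormedSpace.exp (r • A)‖ ≤ K := fun r hr =>
    hK ▸ isCompact_Icc.le_ciSup_of_continuousOn (continuous_exp_smul_const A).norm.continuousOn hr
  -- the outer integrand need not be shown integrable: its integral is bounded through its norm
  calc ∫ s in (t - tc)..t, ‖C (∫ τ in s..t, (NormedSpace.exp ((τ - s) • A)) (w τ))‖ ^ 2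
      ≤ ‖∫ s in (t - tc)..t, ‖C (∫ τ in s..t, (NormedSpace.exp ((τ - s) • A)) (w τ))‖ ^ 2‖ :=
        Real.le_norm_self _
    _ ≤ ‖C‖ ^ 2 * K ^ 2 * (tc * ∫ τ in (t - tc)..t, ‖w τ‖ ^ 2) * |t - (t - tc)| := by
        refine norm_integral_le_of_norm_le_const fun s hs => ?_
        rw [Set.uIoc_of_le (by linarith)] at hs
        rw [Real.norm_of_nonneg (by positivity)]
        exact norm_apply_duhamel_sq_le A C hw hK_bound (Set.Ioc_subset_Icc_self hs)
    _ = ‖C‖ ^ 2 * K ^ 2 * tc ^ 2 * ∫ τ in (t - tc)..t, ‖w τ‖ ^ 2 := by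
        rw [sub_sub_cancel, abs_of_pos htc]
        ring

/-- (Output estimate on the Duhamel term.) For bounded operators
`A : Y → Y`, `C : Y → U` on Hilbert spaces, `t_c > 0`, `t ≥ t_c`, continuous
`w : ℝ → Y`, and `K := sup_{s ∈ [0,t_c]} ‖exp(sA)‖`, one has
`∫_{t−t_c}^t ‖C ∫_s^t exp((τ−s)A) w(τ) dτ‖² ds ≤ ‖C‖² K² t_c² ∫_{t−t_c}^t ‖w‖²`. -/
theorem duhamel_output_estimate
    {Y U : Type*} [NormedAddCommGroup Y] [InnerProductSpace ℝ Y] [CompleteSpace Y]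
    [NormedAddCommGroup U] [InnerProductSpace ℝ U] [CompleteSpace U]
    (A : Y →L[ℝ] Y) (C : Y →L[ℝ] U) (tc t : ℝ) (htc : 0 < tc) (ht : tc ≤ t)
    (w : ℝ → Y) (hw : Continuous w)
    (K : ℝ) (hK : K = ⨆ s : Set.Icc (0 : ℝ) tc, ‖NormedSpace.exp ((s : ℝ) • A)‖) :
    ∫ s in (t - tc)..t,
        ‖C (∫ τ in s..t, (NormedSpace.exp ((τ - s) • A)) (w τ))‖ ^ 2 ≤
      ‖C‖ ^ 2 * K ^ 2 * tc ^ 2 * ∫ τ in (t - tc)..t, ‖w τ‖ ^ 2 :=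
  duhamel_output_estimate_general A C tc t htc w hw K hK
end
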